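/- arXiv:1011.1455 — 8 statements merged into one kernel-verified Lean document; each statement's English description precedes it below -/
import Mathlib

section
/- Let q : ℕ → ℤ be of the form q(n) = p(n)/C where p is an integral quasipolynomial and C is a positive integer dividing p(n) for all n ≥ 0. Then there exists a positive integer π such that for every integer a ≥ 0, the function n ↦ q(πn + a) agrees with an integer polynomial in n, i.e., there exists r ∈ ℤ[X] with q(πn+a) = r(n) for all n. -/
/-- `p` is an integral quasipolynomial. -/
def IsQuasiPoly (p : ℕ → ℤ) : Prop :=
  ∃ π : ℕ, 0 < π ∧ ∃ P : ℕ → Polynomial ℤ, ∀ n : ℕ, p n = (P (n % π)).eval (n : ℤ)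

open Polynomial

lemma key_dvd (f : Polynomial ℤ) (C a : ℤ) :
    (Polynomial.C C) ∣ f.comp (Polynomial.C C * Polynomial.X + Polynomial.C a)
      - Polynomial.C (f.eval a) := by
  induction f using Polynomial.induction_on' with
  | add p q hp hq =>
    simp only [add_comp, eval_add, Polynomial.C_add]
    have : p.comp (Polynomial.C C * Polynomial.X + Polynomial.C a)
        + q.comp (Polynomial.C C * Polynomial.X + Polynomial.C a)
        - (Polynomial.C (p.eval a) + Polynomial.C (q.eval a))
        = (p.comp (Polynomial.C C * Polynomial.X + Polynomial.C a) - Polynomial.C (p.eval a))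
          + (q.comp (Polynomial.C C * Polynomial.X + Polynomial.C a) - Polynomial.C (q.eval a)) := by
      ring
    rw [this]
    exact dvd_add hp hq
  | monomial n c =>
    have h1 : (Polynomial.C C) ∣
        (Polynomial.C C * Polynomial.X + Polynomial.C a) ^ n - (Polynomial.C a) ^ n := by
      have := sub_dvd_pow_sub_pow (Polynomial.C C * Polynomial.X + Polynomial.C a)
        (Polynomial.C a) n
      have h2 : Polynomial.C C * Polynomial.X + Polynomial.C a - Polynomial.C a
          = Polynomial.C C * Polynomial.X := by ring
      rw [h2] at this
      exact dvd_trans (Dvd.intro _ rfl) this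
    have : (Polynomial.monomial n c).comp (Polynomial.C C * Polynomial.X + Polynomial.C a)
        - Polynomial.C ((Polynomial.monomial n c).eval a)
        = Polynomial.C c * ((Polynomial.C C * Polynomial.X + Polynomial.C a) ^ n
          - (Polynomial.C a) ^ n) := by
      simp [Polynomial.monomial_comp, Polynomial.eval_monomial, mul_sub, ← Polynomial.C_pow,
        ← Polynomial.C_mul]
    rw [this]
    exact Dvd.dvd.mul_left h1 _

/-- If `q(n) = p(n)/C` with `p` an integral quasipolynomial and `C` a positive integer
dividing every value `p(n)`, then there is a positive integer `π` such that for every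
`a`, the function `n ↦ q(πn + a)` is given by an integer polynomial. -/
theorem stmt_2 (q p : ℕ → ℤ) (C : ℤ) (hC : 0 < C) (hp : IsQuasiPoly p)
    (hdvd : ∀ n : ℕ, C ∣ p n) (hq : ∀ n : ℕ, q n = p n / C) :
    ∃ π : ℕ, 0 < π ∧ ∀ a : ℕ, ∃ r : Polynomial ℤ,
      ∀ n : ℕ, q (π * n + a) = r.eval (n : ℤ) := by
  obtain ⟨π₀, hπ₀, P, hP⟩ := hp
  refine ⟨π₀ * C.natAbs, by positivity, fun a => ?_⟩
  set f := P (a % π₀) with hf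
  obtain ⟨g, hg⟩ := key_dvd f C a
  refine ⟨Polynomial.C (p a / C) + g.comp (Polynomial.C (π₀ : ℤ) * Polynomial.X), fun n => ?_⟩
  have hmod : (π₀ * C.natAbs * n + a) % π₀ = a % π₀ := by
    rw [mul_assoc, Nat.mul_add_mod]
  have hcast : ((π₀ * C.natAbs * n + a : ℕ) : ℤ) = C * ((π₀ : ℤ) * n) + a := by
    push_cast
    rw [abs_of_pos hC]
    ring
  have heval : p (π₀ * C.natAbs * n + a) = p a + C * g.eval ((π₀ : ℤ) * n) := by
    rw [hP, hmod, hcast, ← hf]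
    have := congrArg (Polynomial.eval ((π₀ : ℤ) * n)) hg.symm
    simp only [Polynomial.eval_sub, Polynomial.eval_comp, Polynomial.eval_add,
      Polynomial.eval_mul, Polynomial.eval_C, Polynomial.eval_X] at this
    have hpa : f.eval (a : ℤ) = p a := (hP a).symm
    linarith [this]
  rw [hq, heval]
  have hC0 : C ≠ 0 := hC.ne'
  rw [Int.add_mul_ediv_left _ _ hC0]
  simp [Polynomial.eval_comp]
end

section
/- Let a, b ∈ ℤ[X] be nonzero polynomials with positive leading coefficients. Then there exist functions Q, R : ℕ → ℤ which are IQ functions, and N ∈ ℕ, such that for all n ≥ N, a(n) = Q(n)·b(n) + R(n) with 0 ≤ R(n) < b(n). -/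
/-- `q` is an IQ function. -/
def IsIQ (q : ℕ → ℤ) : Prop :=
  ∃ p : ℕ → ℤ, IsQuasiPoly p ∧ ∃ C : ℤ, 0 < C ∧ ∀ n : ℕ, C ∣ p n ∧ q n = p n / C

open Polynomial Filter

lemma ev_pos (p : Polynomial ℤ) (hp : 0 < p.leadingCoeff) :
    ∃ N : ℕ, ∀ n ≥ N, 0 < p.eval (n : ℤ) := by
  have hp0 : p ≠ 0 := fun h => by simp [h] at hp
  rcases eq_or_lt_of_le (Nat.zero_le p.natDegree) with hd | hd
  · -- constant
    have : p = C (p.coeff 0) := (Polynomial.eq_C_of_natDegree_eq_zero hd.symm)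
    refine ⟨0, fun n _ => ?_⟩
    rw [this, eval_C]
    rw [this, leadingCoeff_C] at hp
    exact hp
  · set P : Polynomial ℝ := p.map (Int.castRingHom ℝ) with hP
    have hinj : Function.Injective (Int.castRingHom ℝ) := Int.cast_injective
    have hdeg : 0 < P.degree := by
      rw [degree_map_eq_of_injective hinj]
      exact (natDegree_pos_iff_degree_pos).mp hd
    have hlc : 0 ≤ P.leadingCoeff := by
      rw [Polynomial.leadingCoeff_map_of_injective hinj]
      simp only [eq_intCast]
      exact_mod_cast hp.le
    have ht := P.tendsto_atTop_of_leadingCoeff_nonneg hdeg hlc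
    have ht2 : Tendsto (fun n : ℕ => P.eval (n : ℝ)) atTop atTop :=
      ht.comp tendsto_natCast_atTop_atTop
    have := (ht2.eventually_gt_atTop 0).exists_forall_of_atTop
    obtain ⟨N, hN⟩ := this
    refine ⟨N, fun n hn => ?_⟩
    have := hN n hn
    have heq : P.eval (n : ℝ) = ((p.eval (n : ℤ) : ℤ) : ℝ) := by
      simp [hP, eval_map, eval₂_at_natCast]
    rw [heq] at this
    exact_mod_cast this

lemma exists_pseudo (a b : Polynomial ℤ) (hb : b ≠ 0) :
    ∃ (D : ℤ) (q r : Polynomial ℤ), 0 < D ∧ Polynomial.C D * a = q * b + r ∧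
      r.degree < b.degree := by
  have hinj : Function.Injective (algebraMap ℤ ℚ) := fun x y h => by exact_mod_cast h
  have hmapinj : Function.Injective (Polynomial.map (algebraMap ℤ ℚ)) :=
    Polynomial.map_injective _ hinj
  set aQ := a.map (algebraMap ℤ ℚ) with haQ
  set bQ := b.map (algebraMap ℤ ℚ) with hbQdef
  have hbQ : bQ ≠ 0 := fun h => hb (hmapinj (by rw [← hbQdef, h, Polynomial.map_zero]))
  set q := aQ / bQ with hq
  set r := aQ % bQ with hr
  have hdm : bQ * q + r = aQ := EuclideanDomain.div_add_mod aQ bQ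
  have hrdeg : r.degree < bQ.degree := EuclideanDomain.mod_lt _ hbQ
  obtain ⟨d₁, hd₁⟩ := IsLocalization.integerNormalization_map_to_map (nonZeroDivisors ℤ) q
  obtain ⟨d₂, hd₂⟩ := IsLocalization.integerNormalization_map_to_map (nonZeroDivisors ℤ) r
  set q₁ := IsLocalization.integerNormalization (nonZeroDivisors ℤ) q with hq₁
  set r₁ := IsLocalization.integerNormalization (nonZeroDivisors ℤ) r with hr₁
  have hd₁0 : (d₁ : ℤ) ≠ 0 := nonZeroDivisors.coe_ne_zero d₁
  have hd₂0 : (d₂ : ℤ) ≠ 0 := nonZeroDivisors.coe_ne_zero d₂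
  set ε : ℤ := if 0 ≤ (d₁ : ℤ) * (d₂ : ℤ) then 1 else -1 with hε
  have hε0 : ε ≠ 0 := by rw [hε]; split_ifs <;> norm_num
  have hεD : 0 < ε * ((d₁ : ℤ) * (d₂ : ℤ)) := by
    rcases le_or_gt 0 ((d₁:ℤ) * (d₂:ℤ)) with h | h
    · rw [hε, if_pos h, one_mul]
      exact lt_of_le_of_ne h fun hcon => (mul_ne_zero hd₁0 hd₂0) hcon.symm
    · rw [hε, if_neg (not_le.mpr h)]; linarith
  refine ⟨ε * ((d₁:ℤ) * (d₂:ℤ)), Polynomial.C (ε * d₂) * q₁, Polynomial.C (ε * d₁) * r₁,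
    hεD, ?_, ?_⟩
  · apply hmapinj
    simp only [Polynomial.map_mul, Polynomial.map_add, Polynomial.map_C, hd₁, hd₂,
      zsmul_eq_mul]
    have hdm' : a.map (algebraMap ℤ ℚ) = b.map (algebraMap ℤ ℚ) * q + r := by
      rw [← haQ, ← hbQdef]; exact hdm.symm
    rw [hdm']
    simp only [algebraMap_int_eq, eq_intCast, Polynomial.C_eq_intCast]
    push_cast
    ring
  · have hd : ((Polynomial.C (ε * d₁) * r₁).map (algebraMap ℤ ℚ)).degree < bQ.degree := by
      rw [Polynomial.map_mul, Polynomial.map_C, hd₂, zsmul_eq_mul]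
      have h2 : ((d₂:ℤ) : ℚ[X]) = Polynomial.C (((d₂:ℤ) : ℚ)) := (Polynomial.C_eq_intCast _).symm
      rw [h2, ← mul_assoc, ← Polynomial.C_mul, Polynomial.degree_C_mul]
      · exact hrdeg
      · apply mul_ne_zero
        · simpa [map_eq_zero_iff _ hinj] using mul_ne_zero hε0 hd₁0
        · exact_mod_cast hd₂0
    rwa [Polynomial.degree_map_eq_of_injective hinj, hbQdef,
      Polynomial.degree_map_eq_of_injective hinj] at hd

/-- For nonzero integer polynomials `a`, `b` with positive leading coefficients,
there are IQ functions `Q`, `R` which eventually give the integer quotient and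
remainder of `a(n)` by `b(n)`. -/
theorem stmt_4 (a b : Polynomial ℤ) (ha : a ≠ 0) (hb : b ≠ 0)
    (hla : 0 < a.leadingCoeff) (hlb : 0 < b.leadingCoeff) :
    ∃ Q R : ℕ → ℤ, IsIQ Q ∧ IsIQ R ∧ ∃ N : ℕ, ∀ n ≥ N,
      a.eval (n : ℤ) = Q n * b.eval (n : ℤ) + R n ∧
      0 ≤ R n ∧ R n < b.eval (n : ℤ) := by
  obtain ⟨D, q₂, r₂, hD, heq, hrdeg⟩ := exists_pseudo a b hb
  set π : ℕ := D.toNat with hπdef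
  have hπpos : 0 < π := by omega
  have hπD : (π : ℤ) = D := Int.toNat_of_nonneg hD.le
  set c : ℕ → ℤ := fun j =>
    if r₂.leadingCoeff < 0 then ((q₂.eval (j:ℤ) - 1) % D) + 1 else (q₂.eval (j:ℤ)) % D
    with hc
  -- congruence: D ∣ q₂.eval j - c j
  have hcong : ∀ j : ℕ, D ∣ q₂.eval (j:ℤ) - c j := by
    intro j
    have key : ∀ x : ℤ, D ∣ x - x % D := fun x => ⟨x / D, by rw [Int.emod_def]; ring⟩
    rw [hc]
    dsimp only
    split_ifs
    · have := key (q₂.eval (j:ℤ) - 1)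
      obtain ⟨k, hk⟩ := this
      exact ⟨k, by linarith⟩
    · exact key _
  -- bounds on c
  have hc_lb : ∀ j : ℕ, 0 ≤ c j := by
    intro j; rw [hc]; dsimp only; split_ifs
    · have := Int.emod_nonneg (q₂.eval (j:ℤ) - 1) hD.ne'
      linarith
    · exact Int.emod_nonneg _ hD.ne'
  have hc_ub : ∀ j : ℕ, c j ≤ D := by
    intro j; rw [hc]; dsimp only; split_ifs
    · have := Int.emod_lt_of_pos (q₂.eval (j:ℤ) - 1) hD
      linarith
    · exact (Int.emod_lt_of_pos _ hD).le
  have hc_ub' : ∀ j : ℕ, ¬ r₂.leadingCoeff < 0 → c j ≤ D - 1 := by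
    intro j h; rw [hc]; dsimp only; rw [if_neg h]
    have := Int.emod_lt_of_pos (q₂.eval (j:ℤ)) hD
    linarith
  have hc_lb' : ∀ j : ℕ, r₂.leadingCoeff < 0 → 1 ≤ c j := by
    intro j h; rw [hc]; dsimp only; rw [if_pos h]
    have := Int.emod_nonneg (q₂.eval (j:ℤ) - 1) hD.ne'
    linarith
  -- main divisibility for Q numerator
  have hQdvd : ∀ n : ℕ, D ∣ q₂.eval (n:ℤ) - c (n % π) := by
    intro n
    have h1 : (D : ℤ) ∣ (n : ℤ) - ((n % π : ℕ) : ℤ) := by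
      refine ⟨((n / π : ℕ) : ℤ), ?_⟩
      have := Nat.div_add_mod n π
      have : (π : ℤ) * ((n / π : ℕ) : ℤ) + ((n % π : ℕ) : ℤ) = (n : ℤ) := by
        exact_mod_cast congrArg (Nat.cast : ℕ → ℤ) this
      rw [← hπD]; linarith
    have h2 : ((n : ℤ) - ((n % π : ℕ) : ℤ)) ∣ q₂.eval (n:ℤ) - q₂.eval ((n % π : ℕ) : ℤ) :=
      Polynomial.sub_dvd_eval_sub _ _ _
    have h3 : D ∣ q₂.eval (n:ℤ) - q₂.eval ((n % π : ℕ) : ℤ) := dvd_trans h1 h2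
    have h4 := hcong (n % π)
    have := dvd_add h3 h4
    simpa using this
  -- evaluated identity
  have heval : ∀ n : ℕ, D * a.eval (n:ℤ) = q₂.eval (n:ℤ) * b.eval (n:ℤ) + r₂.eval (n:ℤ) := by
    intro n
    have := congrArg (Polynomial.eval (n:ℤ)) heq
    simpa using this
  have hRdvd : ∀ n : ℕ, D ∣ c (n % π) * b.eval (n:ℤ) + r₂.eval (n:ℤ) := by
    intro n
    have h1 : c (n % π) * b.eval (n:ℤ) + r₂.eval (n:ℤ)
        = D * a.eval (n:ℤ) - (q₂.eval (n:ℤ) - c (n % π)) * b.eval (n:ℤ) := by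
      rw [heval n]; ring
    rw [h1]
    exact dvd_sub (Dvd.intro _ rfl) ((hQdvd n).mul_right _)
  refine ⟨fun n => (q₂.eval (n:ℤ) - c (n % π)) / D,
          fun n => (c (n % π) * b.eval (n:ℤ) + r₂.eval (n:ℤ)) / D, ?_, ?_, ?_⟩
  · refine ⟨fun n => q₂.eval (n:ℤ) - c (n % π), ⟨π, hπpos, fun j => q₂ - Polynomial.C (c j),
      fun n => by simp⟩, D, hD, fun n => ⟨hQdvd n, rfl⟩⟩
  · refine ⟨fun n => c (n % π) * b.eval (n:ℤ) + r₂.eval (n:ℤ),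
      ⟨π, hπpos, fun j => Polynomial.C (c j) * b + r₂, fun n => by simp⟩,
      D, hD, fun n => ⟨hRdvd n, rfl⟩⟩
  · -- eventual bounds
    obtain ⟨N₁, hN₁⟩ := ev_pos b hlb
    have hbsub : ∀ s : Polynomial ℤ, s.degree < b.degree → 0 < (s + b).leadingCoeff := by
      intro s hs
      rw [Polynomial.leadingCoeff_add_of_degree_lt hs]
      exact hlb
    obtain ⟨N₂, hN₂⟩ := ev_pos (-r₂ + b) (hbsub _ (by simpa using hrdeg))
    obtain ⟨N₃, hN₃⟩ := ev_pos (r₂ + b) (hbsub _ hrdeg)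
    -- sign of r₂
    have hsign : ∃ N₄ : ℕ, ∀ n ≥ N₄,
        (r₂.leadingCoeff < 0 → r₂.eval (n:ℤ) < 0) ∧
        (¬ r₂.leadingCoeff < 0 → 0 ≤ r₂.eval (n:ℤ)) := by
      rcases lt_trichotomy r₂.leadingCoeff 0 with h | h | h
      · obtain ⟨N, hN⟩ := ev_pos (-r₂) (by simpa using h)
        exact ⟨N, fun n hn => ⟨fun _ => by have := hN n hn; simp at this; linarith,
          fun hcon => absurd h hcon⟩⟩
      · have hr0 : r₂ = 0 := Polynomial.leadingCoeff_eq_zero.mp h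
        exact ⟨0, fun n _ => ⟨fun hcon => absurd (h ▸ hcon) (lt_irrefl 0),
          fun _ => by simp [hr0]⟩⟩
      · obtain ⟨N, hN⟩ := ev_pos r₂ h
        exact ⟨N, fun n hn => ⟨fun hcon => absurd h (asymm hcon), fun _ => (hN n hn).le⟩⟩
    obtain ⟨N₄, hN₄⟩ := hsign
    refine ⟨max (max N₁ N₂) (max N₃ N₄), fun n hn => ?_⟩
    have hn1 := hN₁ n (le_trans (le_trans (le_max_left _ _) (le_max_left _ _)) hn)
    have hn2 := hN₂ n (le_trans (le_trans (le_max_right _ _) (le_max_left _ _)) hn)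
    have hn3 := hN₃ n (le_trans (le_trans (le_max_left _ _) (le_max_right _ _)) hn)
    have hn4 := hN₄ n (le_trans (le_trans (le_max_right _ _) (le_max_right _ _)) hn)
    simp only [Polynomial.eval_add, Polynomial.eval_neg] at hn2 hn3
    set bn := b.eval (n:ℤ)
    set rn := r₂.eval (n:ℤ)
    set cn := c (n % π)
    have hQ : D * ((q₂.eval (n:ℤ) - cn) / D) = q₂.eval (n:ℤ) - cn :=
      Int.mul_ediv_cancel' (hQdvd n)
    have hR : D * ((cn * bn + rn) / D) = cn * bn + rn :=
      Int.mul_ediv_cancel' (hRdvd n)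
    have hRbound : 0 ≤ cn * bn + rn ∧ cn * bn + rn < D * bn := by
      by_cases hneg : r₂.leadingCoeff < 0
      · have h1 := hc_lb' (n % π) hneg
        have h2 := hc_ub (n % π)
        have h3 := (hn4.1) hneg
        constructor
        · nlinarith
        · nlinarith
      · have h1 := hc_lb (n % π)
        have h2 := hc_ub' (n % π) hneg
        have h3 := (hn4.2) hneg
        constructor
        · nlinarith
        · nlinarith
    refine ⟨?_, ?_, ?_⟩
    · have : D * (((q₂.eval (n:ℤ) - cn) / D) * bn + (cn * bn + rn) / D) = D * a.eval (n:ℤ) := by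
        rw [mul_add, ← mul_assoc, hQ, hR, heval n]; ring
      have := mul_left_cancel₀ hD.ne' this
      linarith
    · exact Int.ediv_nonneg hRbound.1 hD.le
    · rw [Int.ediv_lt_iff_lt_mul hD]
      linarith [hRbound.2]
end

section
/- Let s, t : ℕ → ℤ be IQ functions taking positive values for all sufficiently large n. Then the function n ↦ gcd(s(n), t(n)) agrees, for all sufficiently large n, with an IQ function; moreover there exist IQ functions A, B such that gcd(s(n), t(n)) = A(n)·s(n) + B(n)·t(n) for all sufficiently large n. -/
open Polynomial Filter

def HasQuasiPeriod (π : ℕ) (p : ℕ → ℤ) : Prop :=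
  ∃ P : ℕ → ℤ[X], ∀ n : ℕ, p n = (P (n % π)).eval (n : ℤ)

namespace HasQuasiPeriod

variable {π : ℕ} {p q : ℕ → ℤ}

theorem mul_right (h : HasQuasiPeriod π p) (m : ℕ) : HasQuasiPeriod (π * m) p := by
  obtain ⟨P, hP⟩ := h
  refine ⟨fun r => P (r % π), fun n => ?_⟩
  dsimp only
  rw [hP, Nat.mod_mul_right_mod]

theorem mul_left (h : HasQuasiPeriod π p) (m : ℕ) : HasQuasiPeriod (m * π) p :=
  mul_comm π m ▸ h.mul_right m

theorem add (hp : HasQuasiPeriod π p) (hq : HasQuasiPeriod π q) : HasQuasiPeriod π (p + q) := by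
  obtain ⟨P, hP⟩ := hp
  obtain ⟨Q, hQ⟩ := hq
  exact ⟨P + Q, fun n => by simp [hP n, hQ n]⟩

theorem mul (hp : HasQuasiPeriod π p) (hq : HasQuasiPeriod π q) : HasQuasiPeriod π (p * q) := by
  obtain ⟨P, hP⟩ := hp
  obtain ⟨Q, hQ⟩ := hq
  exact ⟨P * Q, fun n => by simp [hP n, hQ n]⟩

theorem neg (hp : HasQuasiPeriod π p) : HasQuasiPeriod π (-p) := by
  obtain ⟨P, hP⟩ := hp
  exact ⟨-P, fun n => by simp [hP n]⟩

end HasQuasiPeriod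

theorem IsQuasiPoly.exists_common_period {p q : ℕ → ℤ} (hp : IsQuasiPoly p) (hq : IsQuasiPoly q) :
    ∃ π, 0 < π ∧ HasQuasiPeriod π p ∧ HasQuasiPeriod π q := by
  obtain ⟨π₁, h₁, hp : HasQuasiPeriod π₁ p⟩ := hp
  obtain ⟨π₂, h₂, hq : HasQuasiPeriod π₂ q⟩ := hq
  exact ⟨π₁ * π₂, Nat.mul_pos h₁ h₂, hp.mul_right π₂, hq.mul_left π₁⟩

theorem isQuasiPoly_eval (P : ℤ[X]) : IsQuasiPoly fun n => P.eval (n : ℤ) :=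
  ⟨1, one_pos, fun _ => P, fun _ => rfl⟩

theorem isQuasiPoly_comp_mod {m : ℕ} (hm : 0 < m) (c : ℕ → ℤ) : IsQuasiPoly fun n => c (n % m) :=
  ⟨m, hm, fun r => C (c r), fun n => by simp⟩

def quasiPolynomials : Subring (ℕ → ℤ) where
  carrier := {p | IsQuasiPoly p}
  zero_mem' := isQuasiPoly_comp_mod one_pos 0
  one_mem' := isQuasiPoly_comp_mod one_pos 1
  add_mem' := fun hp hq =>
    let ⟨π, hπ, hp, hq⟩ := hp.exists_common_period hq
    ⟨π, hπ, hp.add hq⟩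
  mul_mem' := fun hp hq =>
    let ⟨π, hπ, hp, hq⟩ := hp.exists_common_period hq
    ⟨π, hπ, hp.mul hq⟩
  neg_mem' := fun ⟨π, hπ, hp⟩ => ⟨π, hπ, HasQuasiPeriod.neg hp⟩

theorem mem_quasiPolynomials {p : ℕ → ℤ} : p ∈ quasiPolynomials ↔ IsQuasiPoly p := Iff.rfl

theorem IsQuasiPoly.const_mul (c : ℤ) {p : ℕ → ℤ} (hp : IsQuasiPoly p) :
    IsQuasiPoly fun n => c * p n :=
  quasiPolynomials.mul_mem (intCast_mem _ c) hp

theorem isIQ_iff {q : ℕ → ℤ} : IsIQ q ↔ ∃ C : ℤ, 0 < C ∧ IsQuasiPoly fun n => C * q n := by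
  constructor
  · rintro ⟨p, hp, C, hC, hpq⟩
    refine ⟨C, hC, ?_⟩
    convert hp using 2 with n
    rw [(hpq n).2, Int.mul_ediv_cancel' (hpq n).1]
  · rintro ⟨C, hC, hp⟩
    exact ⟨_, hp, C, hC, fun n => ⟨dvd_mul_right C _, (Int.mul_ediv_cancel_left _ hC.ne').symm⟩⟩

theorem IsQuasiPoly.isIQ {p : ℕ → ℤ} (hp : IsQuasiPoly p) : IsIQ p :=
  isIQ_iff.2 ⟨1, one_pos, by simpa using hp⟩

def iqFunctions : Subring (ℕ → ℤ) where
  carrier := {q | IsIQ q}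
  zero_mem' := quasiPolynomials.zero_mem.isIQ
  one_mem' := quasiPolynomials.one_mem.isIQ
  add_mem' := by
    rintro p q hp hq
    obtain ⟨C₁, hC₁, hp⟩ := isIQ_iff.1 hp
    obtain ⟨C₂, hC₂, hq⟩ := isIQ_iff.1 hq
    refine isIQ_iff.2 ⟨C₁ * C₂, mul_pos hC₁ hC₂, ?_⟩
    convert mem_quasiPolynomials.1 <| quasiPolynomials.add_mem (hp.const_mul C₂) (hq.const_mul C₁)
      using 2 with n
    simp only [Pi.add_apply]
    ring
  mul_mem' := by
    rintro p q hp hq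
    obtain ⟨C₁, hC₁, hp⟩ := isIQ_iff.1 hp
    obtain ⟨C₂, hC₂, hq⟩ := isIQ_iff.1 hq
    refine isIQ_iff.2 ⟨C₁ * C₂, mul_pos hC₁ hC₂, ?_⟩
    convert mem_quasiPolynomials.1 <| quasiPolynomials.mul_mem hp hq using 2 with n
    simp only [Pi.mul_apply]
    ring
  neg_mem' := by
    rintro p hp
    obtain ⟨C, hC, hp⟩ := isIQ_iff.1 hp
    refine isIQ_iff.2 ⟨C, hC, ?_⟩
    convert mem_quasiPolynomials.1 <| quasiPolynomials.neg_mem hp using 2 with n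
    simp only [Pi.neg_apply, mul_neg]

theorem IsIQ.of_mul_left {C : ℤ} (hC : C ≠ 0) {q : ℕ → ℤ} (h : IsIQ fun n => C * q n) : IsIQ q := by
  obtain ⟨D, hD, hp⟩ := isIQ_iff.1 h
  refine isIQ_iff.2 ⟨D * C * C, by rw [mul_assoc]; exact mul_pos hD (mul_self_pos.2 hC), ?_⟩
  convert hp.const_mul C using 2 with n
  ring

theorem isIQ_piecewise {m : ℕ} (hm : 0 < m) (f : ℕ → ℕ → ℤ) (hf : ∀ r < m, IsIQ (f r)) :
    IsIQ fun n => f (n % m) n := by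
  have hsum : (fun n => f (n % m) n) =
      ∑ r ∈ Finset.range m, (fun n => if n % m = r then 1 else 0) * f r := by
    ext n
    simp [Finset.sum_apply, ite_mul, Nat.mod_lt n hm]
  rw [hsum]
  refine iqFunctions.sum_mem fun r hr => iqFunctions.mul_mem ?_ (hf r (Finset.mem_range.1 hr))
  exact (isQuasiPoly_comp_mod hm fun k => if k = r then 1 else 0).isIQ

theorem Int.gcd_dvd_gcd_of_modEq {R a b a' b' : ℤ} (h : (Int.gcd a b : ℤ) ∣ R)
    (ha : a ≡ a' [ZMOD R]) (hb : b ≡ b' [ZMOD R]) : Int.gcd a b ∣ Int.gcd a' b' := by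
  rw [← Int.natCast_dvd_natCast]
  exact Int.dvd_coe_gcd ((ha.of_dvd h).dvd_iff.mp (Int.gcd_dvd_left a b))
    ((hb.of_dvd h).dvd_iff.mp (Int.gcd_dvd_right a b))

theorem Int.gcd_eq_gcd_of_modEq {R a b a' b' : ℤ} (h : (Int.gcd a b : ℤ) ∣ R)
    (h' : (Int.gcd a' b' : ℤ) ∣ R) (ha : a ≡ a' [ZMOD R]) (hb : b ≡ b' [ZMOD R]) :
    Int.gcd a b = Int.gcd a' b' :=
  Nat.dvd_antisymm (Int.gcd_dvd_gcd_of_modEq h ha hb) (Int.gcd_dvd_gcd_of_modEq h' ha.symm hb.symm)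

theorem Polynomial.eval_mod_natAbs_modEq (P : ℤ[X]) (R : ℤ) (n : ℕ) :
    P.eval ((n % R.natAbs : ℕ) : ℤ) ≡ P.eval (n : ℤ) [ZMOD R] := by
  refine Int.modEq_of_dvd (dvd_trans ?_ (sub_dvd_eval_sub _ _ P))
  rw [Int.natCast_mod, Int.natCast_natAbs]
  exact ((Int.mod_modEq (n : ℤ) |R|).of_dvd (self_dvd_abs R)).dvd

theorem Polynomial.eventually_sign_eval_eq (D : ℤ[X]) :
    ∀ᶠ n : ℕ in atTop, (D.eval (n : ℤ)).sign = D.leadingCoeff.sign := by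
  wlog hD : 0 < D.leadingCoeff generalizing D
  · rcases (not_lt.1 hD).lt_or_eq with hneg | hzero
    · filter_upwards [this (-D) (by simpa using hneg)] with n hn
      simpa [Int.sign_neg] using hn
    · simp [leadingCoeff_eq_zero.1 hzero]
  set P := D.map (Int.castRingHom ℝ)
  have hlc : P.leadingCoeff = D.leadingCoeff := leadingCoeff_map_of_injective Int.cast_injective D
  have hpos : ∀ᶠ x : ℝ in atTop, 0 < P.eval x :=
    P.isEquivalent_atTop_lead.eventually_pos <| (eventually_gt_atTop 0).mono fun x hx => by
      rw [hlc]; exact mul_pos (Int.cast_pos.2 hD) (pow_pos hx _)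
  filter_upwards [tendsto_natCast_atTop_atTop.eventually hpos] with n hn
  rw [Int.sign_eq_one_of_pos hD, Int.sign_eq_one_of_pos]
  simpa [P, eval_map] using hn

theorem Polynomial.isCoprime_map_of_isRelPrime {R K : Type*} [CommRing R] [IsDomain R]
    [NormalizedGCDMonoid R] [Field K] [Algebra R K] [IsFractionRing R K] {p q : R[X]}
    (h : IsRelPrime p q) : IsCoprime (p.map (algebraMap R K)) (q.map (algebraMap R K)) := by
  have hinj : Function.Injective (map (algebraMap R K)) :=
    map_injective _ (IsFractionRing.injective R K)
  rw [← isRelPrime_iff_isCoprime]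
  intro d hdp hdq
  rcases eq_or_ne d 0 with rfl | hd
  · rw [zero_dvd_iff, ← Polynomial.map_zero (algebraMap R K)] at hdp hdq
    cases hinj hdp; cases hinj hdq
    exact absurd (h dvd_rfl dvd_rfl) not_isUnit_zero
  refine isUnit_or_eq_zero_of_isUnit_integerNormalization_primPart (R := R) hd ?_
  set e := (IsLocalization.integerNormalization (nonZeroDivisors R) d).primPart
  obtain ⟨b, hb, hbd⟩ := IsLocalization.integerNormalization_spec (nonZeroDivisors R) d
  have hbunit : IsUnit (C (algebraMap R K b)) :=
    isUnit_C.2 (IsFractionRing.to_map_ne_zero_of_mem_nonZeroDivisors hb).isUnit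
  have hed : e.map (algebraMap R K) ∣ d := by
    rw [← hbunit.dvd_mul_left, ← Polynomial.algebraMap_apply, ← Algebra.smul_def, ← hbd]
    exact map_dvd _ (primPart_dvd _)
  have hprim : e.IsPrimitive := isPrimitive_primPart _
  exact h (hprim.dvd_of_fraction_map_dvd_fraction_map (hed.trans hdp))
    (hprim.dvd_of_fraction_map_dvd_fraction_map (hed.trans hdq))

theorem Polynomial.exists_mul_add_mul_eq_C_of_isCoprime_map {R K : Type*} [CommRing R] [IsDomain R]
    [Field K] [Algebra R K] [IsFractionRing R K] {p q : R[X]}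
    (h : IsCoprime (p.map (algebraMap R K)) (q.map (algebraMap R K))) :
    ∃ (A B : R[X]) (r : R), r ≠ 0 ∧ A * p + B * q = C r := by
  obtain ⟨u, v, huv⟩ := h
  obtain ⟨b, hb, hbu⟩ := IsLocalization.integerNormalization_spec (nonZeroDivisors R) u
  obtain ⟨c, hc, hcv⟩ := IsLocalization.integerNormalization_spec (nonZeroDivisors R) v
  refine ⟨C c * IsLocalization.integerNormalization (nonZeroDivisors R) u,
    C b * IsLocalization.integerNormalization (nonZeroDivisors R) v, b * c,
    mul_ne_zero (nonZeroDivisors.ne_zero hb) (nonZeroDivisors.ne_zero hc),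
    map_injective _ (IsFractionRing.injective R K) ?_⟩
  simp only [Polynomial.map_add, Polynomial.map_mul, map_C, hbu, hcv, Algebra.smul_def,
    Polynomial.algebraMap_apply, map_mul]
  linear_combination (C (algebraMap R K b) * C (algebraMap R K c)) * huv

theorem Polynomial.gcd_eval_eq_gcd_eval_mod_of_mul_add_mul_eq_C {F G A B : ℤ[X]} {R : ℤ}
    (h : A * F + B * G = C R) (n : ℕ) :
    Int.gcd (F.eval (n : ℤ)) (G.eval (n : ℤ)) =
      Int.gcd (F.eval ((n % R.natAbs : ℕ) : ℤ)) (G.eval ((n % R.natAbs : ℕ) : ℤ)) := by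
  have hgcd_dvd : ∀ x : ℤ, (Int.gcd (F.eval x) (G.eval x) : ℤ) ∣ R := fun x => by
    have hx : A.eval x * F.eval x + B.eval x * G.eval x = R := by simpa using congrArg (eval x) h
    exact hx ▸ dvd_add (dvd_mul_of_dvd_right (Int.gcd_dvd_left _ _) _)
      (dvd_mul_of_dvd_right (Int.gcd_dvd_right _ _) _)
  exact Int.gcd_eq_gcd_of_modEq (hgcd_dvd _) (hgcd_dvd _) (F.eval_mod_natAbs_modEq R n).symm
    (G.eval_mod_natAbs_modEq R n).symm

theorem exists_isIQ_gcd_eval_eq_of_mul_add_mul_eq_C {F G A B : ℤ[X]} {R : ℤ} (hR : R ≠ 0)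
    (h : A * F + B * G = C R) :
    ∃ a b : ℕ → ℤ, IsIQ a ∧ IsIQ b ∧ ∀ n : ℕ,
      (Int.gcd (F.eval (n : ℤ)) (G.eval (n : ℤ)) : ℤ) =
        a n * F.eval (n : ℤ) + b n * G.eval (n : ℤ) := by
  set m := R.natAbs
  have hm : 0 < m := Int.natAbs_pos.2 hR
  -- Bézout coefficients at the residue `n % m`; `K n` is their error at `n`, a multiple of `R`.
  set y : ℕ → ℤ := fun n => Int.gcdA (F.eval ((n % m : ℕ) : ℤ)) (G.eval ((n % m : ℕ) : ℤ))
  set z : ℕ → ℤ := fun n => Int.gcdB (F.eval ((n % m : ℕ) : ℤ)) (G.eval ((n % m : ℕ) : ℤ))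
  set K : ℕ → ℤ := fun n => y n * (F.eval (n : ℤ) - F.eval ((n % m : ℕ) : ℤ)) +
    z n * (G.eval (n : ℤ) - G.eval ((n % m : ℕ) : ℤ))
  have hK : ∀ n, R ∣ K n := fun n =>
    dvd_add (dvd_mul_of_dvd_right (F.eval_mod_natAbs_modEq R n).dvd _)
      (dvd_mul_of_dvd_right (G.eval_mod_natAbs_modEq R n).dvd _)
  have hy : IsIQ y :=
    (isQuasiPoly_comp_mod hm fun r => Int.gcdA (F.eval (r : ℤ)) (G.eval (r : ℤ))).isIQ
  have hz : IsIQ z :=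
    (isQuasiPoly_comp_mod hm fun r => Int.gcdB (F.eval (r : ℤ)) (G.eval (r : ℤ))).isIQ
  have hk : IsIQ fun n => K n / R := by
    refine IsIQ.of_mul_left hR ?_
    simp_rw [Int.mul_ediv_cancel' (hK _)]
    exact iqFunctions.add_mem
      (iqFunctions.mul_mem hy <| iqFunctions.sub_mem (isQuasiPoly_eval F).isIQ
        (isQuasiPoly_comp_mod hm fun r => F.eval (r : ℤ)).isIQ)
      (iqFunctions.mul_mem hz <| iqFunctions.sub_mem (isQuasiPoly_eval G).isIQ
        (isQuasiPoly_comp_mod hm fun r => G.eval (r : ℤ)).isIQ)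
  refine ⟨fun n => y n - K n / R * A.eval (n : ℤ), fun n => z n - K n / R * B.eval (n : ℤ),
    iqFunctions.sub_mem hy (iqFunctions.mul_mem hk (isQuasiPoly_eval A).isIQ),
    iqFunctions.sub_mem hz (iqFunctions.mul_mem hk (isQuasiPoly_eval B).isIQ), fun n => ?_⟩
  have hBezout := Int.gcd_eq_gcd_ab (F.eval ((n % m : ℕ) : ℤ)) (G.eval ((n % m : ℕ) : ℤ))
  have hKn : K n = y n * (F.eval (n : ℤ) - F.eval ((n % m : ℕ) : ℤ)) +
      z n * (G.eval (n : ℤ) - G.eval ((n % m : ℕ) : ℤ)) := rfl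
  have hAB : A.eval (n : ℤ) * F.eval (n : ℤ) + B.eval (n : ℤ) * G.eval (n : ℤ) = R := by
    simpa using congrArg (eval (n : ℤ)) h
  rw [gcd_eval_eq_gcd_eval_mod_of_mul_add_mul_eq_C h, hBezout]
  linear_combination (K n / R) * hAB + Int.mul_ediv_cancel' (hK n) + hKn

theorem Polynomial.exists_isIQ_gcd_eval_eq (F G : ℤ[X]) :
    ∃ a b : ℕ → ℤ, IsIQ a ∧ IsIQ b ∧ ∀ᶠ n : ℕ in atTop,
      (Int.gcd (F.eval (n : ℤ)) (G.eval (n : ℤ)) : ℤ) =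
        a n * F.eval (n : ℤ) + b n * G.eval (n : ℤ) := by
  obtain ⟨F₁, G₁, hF, hG, hunit⟩ := extract_gcd F G
  generalize gcd F G = D at hF hG
  subst hF hG
  obtain ⟨A, B, R, hR, hAB⟩ := exists_mul_add_mul_eq_C_of_isCoprime_map (K := ℚ)
    (isCoprime_map_of_isRelPrime (gcd_isUnit_iff_isRelPrime.1 hunit))
  obtain ⟨a, b, ha, hb, hab⟩ := exists_isIQ_gcd_eval_eq_of_mul_add_mul_eq_C hR hAB
  set ε := D.leadingCoeff.sign
  refine ⟨fun n => ε * a n, fun n => ε * b n, iqFunctions.mul_mem (intCast_mem _ ε) ha,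
    iqFunctions.mul_mem (intCast_mem _ ε) hb, ?_⟩
  filter_upwards [D.eventually_sign_eval_eq] with n hn
  rw [eval_mul, eval_mul, Int.gcd_mul_left, Nat.cast_mul, ← Int.sign_mul_self_eq_natAbs,
    hn, hab n]
  ring

theorem IsQuasiPoly.exists_isIQ_gcd_eq {p q : ℕ → ℤ} (hp : IsQuasiPoly p) (hq : IsQuasiPoly q) :
    ∃ a b : ℕ → ℤ, IsIQ a ∧ IsIQ b ∧ ∀ᶠ n : ℕ in atTop,
      (Int.gcd (p n) (q n) : ℤ) = a n * p n + b n * q n := by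
  obtain ⟨π, hπ, ⟨P, hP⟩, ⟨Q, hQ⟩⟩ := hp.exists_common_period hq
  choose a b ha hb hab using fun r => (P r).exists_isIQ_gcd_eval_eq (Q r)
  refine ⟨fun n => a (n % π) n, fun n => b (n % π) n, isIQ_piecewise hπ a fun r _ => ha r,
    isIQ_piecewise hπ b fun r _ => hb r, ?_⟩
  filter_upwards [(eventually_all_finset (Finset.range π)).2 fun r _ => hab r] with n hn
  rw [hP n, hQ n]
  exact hn _ (Finset.mem_range.2 (Nat.mod_lt n hπ))

theorem IsIQ.exists_isIQ_gcd_eq {s t : ℕ → ℤ} (hs : IsIQ s) (ht : IsIQ t) :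
    ∃ a b : ℕ → ℤ, IsIQ a ∧ IsIQ b ∧ ∀ᶠ n : ℕ in atTop,
      (Int.gcd (s n) (t n) : ℤ) = a n * s n + b n * t n := by
  obtain ⟨C₁, hC₁, hs⟩ := isIQ_iff.1 hs
  obtain ⟨C₂, hC₂, ht⟩ := isIQ_iff.1 ht
  have hC : 0 < C₁ * C₂ := mul_pos hC₁ hC₂
  have hs' : IsQuasiPoly fun n => C₁ * C₂ * s n := by
    convert hs.const_mul C₂ using 2 with n
    ring
  have ht' : IsQuasiPoly fun n => C₁ * C₂ * t n := by
    convert ht.const_mul C₁ using 2 with n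
    ring
  obtain ⟨a, b, ha, hb, hab⟩ := hs'.exists_isIQ_gcd_eq ht'
  refine ⟨a, b, ha, hb, ?_⟩
  filter_upwards [hab] with n hn
  rw [Int.gcd_mul_left, Nat.cast_mul, Int.natAbs_of_nonneg hC.le] at hn
  exact mul_left_cancel₀ hC.ne' (by rw [hn]; ring)

theorem stmt_5_general (s t : ℕ → ℤ)
    (hs : IsIQ s) (ht : IsIQ t) :
    ∃ G A B : ℕ → ℤ, IsIQ G ∧ IsIQ A ∧ IsIQ B ∧ ∃ N : ℕ, ∀ n ≥ N,
      (Int.gcd (s n) (t n) : ℤ) = G n ∧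
      (Int.gcd (s n) (t n) : ℤ) = A n * s n + B n * t n := by
  obtain ⟨a, b, ha, hb, hab⟩ := hs.exists_isIQ_gcd_eq ht
  obtain ⟨N, hN⟩ := eventually_atTop.1 hab
  exact ⟨fun n => a n * s n + b n * t n, a, b,
    iqFunctions.add_mem (iqFunctions.mul_mem ha hs) (iqFunctions.mul_mem hb ht), ha, hb,
    N, fun n hn => ⟨hN n hn, hN n hn⟩⟩

/-- If `s`, `t` are IQ functions which are eventually positive, then `gcd(s(n), t(n))`
eventually agrees with an IQ function, and there are IQ functions `A`, `B` with
`gcd(s(n), t(n)) = A(n)·s(n) + B(n)·t(n)` for all sufficiently large `n`. -/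
theorem stmt_5 (s t : ℕ → ℤ)
    (hs : IsIQ s) (ht : IsIQ t)
    (hspos : ∃ N : ℕ, ∀ n ≥ N, 0 < s n) (htpos : ∃ N : ℕ, ∀ n ≥ N, 0 < t n) :
    ∃ G A B : ℕ → ℤ, IsIQ G ∧ IsIQ A ∧ IsIQ B ∧ ∃ N : ℕ, ∀ n ≥ N,
      (Int.gcd (s n) (t n) : ℤ) = G n ∧
      (Int.gcd (s n) (t n) : ℤ) = A n * s n + B n * t n :=
  stmt_5_general s t hs ht
end

section
/- Let a, b ∈ ℤ[X] be eventually positive integer polynomials. Then the function n ↦ gcd(a(n), b(n)) is eventually an IQ function, i.e. gcd(a(n), b(n)) is eventually equal to p(n)/C for some integral quasipolynomial p and constant C dividing all values p(n). -/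
open Polynomial IsLocalization

-- Lemma 1: eventual sign
lemma ev_sign (d : Polynomial ℤ) (hd : d ≠ 0) :
    ∃ s : ℤ, (s = 1 ∨ s = -1) ∧ ∃ N : ℕ, ∀ n ≥ N, 0 < s * d.eval (n : ℤ) := by
  rcases le_or_gt d.degree 0 with h | h
  · obtain ⟨c, rfl⟩ : ∃ c, d = C c := ⟨d.coeff 0, eq_C_of_degree_le_zero h⟩
    have hc : c ≠ 0 := by simpa using hd
    rcases hc.lt_or_gt with hc' | hc'
    · exact ⟨-1, Or.inr rfl, 0, fun n _ => by simp; omega⟩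
    · exact ⟨1, Or.inl rfl, 0, fun n _ => by simpa using hc'⟩
  · set D : Polynomial ℝ := d.map (Int.castRingHom ℝ) with hD
    have hdegD : 0 < D.degree := by
      rwa [degree_map_eq_of_injective (by exact_mod_cast Int.cast_injective)]
    have key : ∀ s : ℤ, Filter.Tendsto (fun x : ℝ => (s * 1 : ℝ) * D.eval x) Filter.atTop
        Filter.atTop → ∃ N : ℕ, ∀ n ≥ N, 0 < s * d.eval (n : ℤ) := by
      intro s hts
      have := (hts.comp (tendsto_natCast_atTop_atTop (R := ℝ))).eventually_ge_atTop 1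
      rw [Filter.eventually_atTop] at this
      obtain ⟨N, hN⟩ := this
      refine ⟨N, fun n hn => ?_⟩
      have := hN n hn
      simp only [Function.comp] at this
      have he : ((d.eval (n : ℤ) : ℤ) : ℝ) = D.eval ((n : ℕ) : ℝ) := by
        rw [hD]
        rw [show ((n : ℕ) : ℝ) = ((n : ℤ) : ℝ) by push_cast; ring, eval_intCast_map]
        rfl
      have : (1 : ℝ) ≤ (s : ℝ) * ((d.eval (n:ℤ) : ℤ) : ℝ) := by
        rw [he]; linarith [this]
      have : (0 : ℝ) < ((s * d.eval (n:ℤ) : ℤ) : ℝ) := by push_cast; nlinarith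
      exact_mod_cast this
    rcases le_or_gt 0 D.leadingCoeff with hl | hl
    · refine ⟨1, Or.inl rfl, key 1 ?_⟩
      simpa using D.tendsto_atTop_of_leadingCoeff_nonneg hdegD hl
    · refine ⟨-1, Or.inr rfl, key (-1) ?_⟩
      have h2 := D.tendsto_atBot_of_leadingCoeff_nonpos hdegD hl.le
      rw [← Filter.tendsto_neg_atTop_iff] at h2
      convert h2 using 2 with x
      push_cast; ring

-- Lemma 3: relatively prime integer polys are coprime over ℚ
lemma relprime_coprime {a₁ b₁ : Polynomial ℤ} (h : IsRelPrime a₁ b₁) (ha : a₁ ≠ 0) (hb : b₁ ≠ 0) :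
    IsCoprime (a₁.map (algebraMap ℤ ℚ)) (b₁.map (algebraMap ℤ ℚ)) := by
  rw [← isRelPrime_iff_isCoprime]
  intro q hqa hqb
  rcases eq_or_ne q 0 with rfl | hq0
  · rw [zero_dvd_iff, Polynomial.map_eq_zero_iff (IsFractionRing.injective ℤ ℚ)] at hqa
    exact absurd hqa ha
  set Q := (integerNormalization (nonZeroDivisors ℤ) q).primPart with hQ
  obtain ⟨⟨c, hc0⟩, hc⟩ := integerNormalization_map_to_map (nonZeroDivisors ℤ) q
  have hcne : (c : ℚ) ≠ 0 := by
    simpa using nonZeroDivisors.ne_zero hc0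
  have hmain : ∀ f : Polynomial ℤ, f ≠ 0 → q ∣ f.map (algebraMap ℤ ℚ) → Q ∣ f := by
    intro f hf hqf
    have hsm : (c : ℤ) • q = q * C ((c : ℚ)) := by
      rw [zsmul_eq_mul, mul_comm]
      congr 1
    have h1 : Q.map (algebraMap ℤ ℚ) ∣ q * C (c : ℚ) := by
      refine dvd_trans (Polynomial.map_dvd _ (primPart_dvd _)) ?_
      rw [hc, hsm]
    have hCu : IsUnit (C (c : ℚ)) := isUnit_C.mpr (isUnit_iff_ne_zero.mpr hcne)
    have h2 : Q.map (algebraMap ℤ ℚ) ∣ f.primPart.map (algebraMap ℤ ℚ) := by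
      have h3 : Q.map (algebraMap ℤ ℚ) ∣ f.map (algebraMap ℤ ℚ) :=
        (hCu.dvd_mul_right.mp h1).trans hqf
      have h4 : f.map (algebraMap ℤ ℚ) =
          C ((f.content : ℤ) : ℚ) * f.primPart.map (algebraMap ℤ ℚ) := by
        conv_lhs => rw [f.eq_C_content_mul_primPart]
        rw [Polynomial.map_mul, map_C]; rfl
      have hcontu : IsUnit (C ((f.content : ℤ) : ℚ)) := by
        refine isUnit_C.mpr (isUnit_iff_ne_zero.mpr ?_)
        simp [Polynomial.content_eq_zero_iff, hf]
      rw [h4] at h3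
      exact hcontu.dvd_mul_left.mp h3
    exact ((isPrimitive_primPart _).dvd_of_fraction_map_dvd_fraction_map
      h2).trans (f.primPart_dvd)
  have hu : IsUnit Q := h (hmain a₁ ha hqa) (hmain b₁ hb hqb)
  exact isUnit_or_eq_zero_of_isUnit_integerNormalization_primPart hq0 hu

lemma bezout_int {a₁ b₁ : Polynomial ℤ}
    (h : IsCoprime (a₁.map (algebraMap ℤ ℚ)) (b₁.map (algebraMap ℤ ℚ))) :
    ∃ (U V : Polynomial ℤ) (m : ℤ), m ≠ 0 ∧ U * a₁ + V * b₁ = C m := by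
  obtain ⟨u, v, huv⟩ := h
  obtain ⟨⟨c, hc0⟩, hc⟩ := integerNormalization_map_to_map (nonZeroDivisors ℤ) u
  obtain ⟨⟨c', hc'0⟩, hc'⟩ := integerNormalization_map_to_map (nonZeroDivisors ℤ) v
  refine ⟨integerNormalization (nonZeroDivisors ℤ) u * C c',
    integerNormalization (nonZeroDivisors ℤ) v * C c, c * c',
    mul_ne_zero (nonZeroDivisors.ne_zero hc0) (nonZeroDivisors.ne_zero hc'0), ?_⟩
  apply Polynomial.map_injective (algebraMap ℤ ℚ) (IsFractionRing.injective ℤ ℚ)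
  have hsm : ∀ (k : ℤ) (q : Polynomial ℚ), (k : ℤ) • q = C ((k : ℚ)) * q := by
    intro k q
    rw [zsmul_eq_mul]
    congr 1
  simp only [Polynomial.map_add, Polynomial.map_mul, hc, hc', map_C, hsm]
  have hfix : ∀ k : ℤ, algebraMap ℤ ℚ k = (k : ℚ) := fun k => by simp
  simp only [hfix]
  push_cast
  simp only [C_mul]
  linear_combination (C ((c : ℚ)) * C ((c' : ℚ))) * huv

lemma gcd_periodic {a₁ b₁ U V : Polynomial ℤ} {m : ℤ} (hm : m ≠ 0)
    (hbez : U * a₁ + V * b₁ = C m) (n : ℕ) :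
    Int.gcd (a₁.eval (n : ℤ)) (b₁.eval (n : ℤ)) =
      Int.gcd (a₁.eval ((n % m.natAbs : ℕ) : ℤ)) (b₁.eval ((n % m.natAbs : ℕ) : ℤ)) := by
  set π := m.natAbs with hπ
  set r := n % π with hr
  -- gcd at any point divides m
  have hdvdm : ∀ k : ℕ, (Int.gcd (a₁.eval (k : ℤ)) (b₁.eval (k : ℤ)) : ℤ) ∣ m := by
    intro k
    have := congrArg (Polynomial.eval (k : ℤ)) hbez
    simp only [eval_add, eval_mul, eval_C] at this
    rw [← this]
    exact dvd_add (Dvd.dvd.mul_left (Int.gcd_dvd_left _ _) _) (Dvd.dvd.mul_left (Int.gcd_dvd_right _ _) _)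
  -- m divides eval differences
  have hmod : ∀ f : Polynomial ℤ, m ∣ f.eval ((n : ℕ) : ℤ) - f.eval ((r : ℕ) : ℤ) := by
    intro f
    have h1 : ((n : ℤ) - (r : ℤ)) ∣ f.eval (n : ℤ) - f.eval (r : ℤ) := sub_dvd_eval_sub _ _ f
    refine dvd_trans ?_ h1
    have hle : r ≤ n := Nat.mod_le n π
    have h5 : π ∣ n - r := by
      have := Nat.div_add_mod n π
      exact ⟨n / π, by omega⟩
    have h6 : (π : ℤ) ∣ (n : ℤ) - (r : ℤ) := by
      have := Int.natCast_dvd_natCast.mpr h5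
      rwa [Nat.cast_sub hle] at this
    rwa [hπ, Int.natAbs_dvd] at h6
  -- two gcds divide each other
  have key : ∀ x y x' y' : ℤ, m ∣ x - x' → m ∣ y - y' → (Int.gcd x y : ℤ) ∣ m →
      (Int.gcd x y : ℤ) ∣ Int.gcd x' y' := by
    intro x y x' y' hx hy hgm
    refine Int.dvd_coe_gcd ?_ ?_
    · have h1 : (Int.gcd x y : ℤ) ∣ x - x' := hgm.trans hx
      have h2 : (Int.gcd x y : ℤ) ∣ x := Int.gcd_dvd_left _ _
      have := dvd_sub h2 h1
      simpa using this
    · have h1 : (Int.gcd x y : ℤ) ∣ y - y' := hgm.trans hy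
      have h2 : (Int.gcd x y : ℤ) ∣ y := Int.gcd_dvd_right _ _
      have := dvd_sub h2 h1
      simpa using this
  apply Nat.dvd_antisymm
  · exact_mod_cast key _ _ _ _ (hmod a₁) (hmod b₁) (hdvdm n)
  · exact_mod_cast key _ _ _ _ (dvd_sub_comm.mp (hmod a₁)) (dvd_sub_comm.mp (hmod b₁)) (hdvdm r)

/-- For eventually positive integer polynomials `a`, `b`, the function
`n ↦ gcd(a(n), b(n))` is eventually equal to `p(n)/C` for some integral
quasipolynomial `p` and positive constant `C` dividing all values `p(n)`. -/
theorem stmt_6 (a b : Polynomial ℤ)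
    (hapos : ∃ N : ℕ, ∀ n ≥ N, 0 < a.eval (n : ℤ))
    (hbpos : ∃ N : ℕ, ∀ n ≥ N, 0 < b.eval (n : ℤ)) :
    ∃ p : ℕ → ℤ, IsQuasiPoly p ∧ ∃ C : ℤ, 0 < C ∧ (∀ n : ℕ, C ∣ p n) ∧
      ∃ N : ℕ, ∀ n ≥ N,
        (Int.gcd (a.eval (n : ℤ)) (b.eval (n : ℤ)) : ℤ) = p n / C := by
  obtain ⟨Na, hNa⟩ := hapos
  obtain ⟨Nb, hNb⟩ := hbpos
  have ha0 : a ≠ 0 := fun h => by simpa [h] using hNa Na le_rfl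
  have hb0 : b ≠ 0 := fun h => by simpa [h] using hNb Nb le_rfl
  set d : Polynomial ℤ := gcd a b with hd
  obtain ⟨a₁, b₁, ha, hb, hu⟩ := extract_gcd a b
  have hd0 : d ≠ 0 := fun h => ha0 ((gcd_eq_zero_iff a b).mp h).1
  have ha₁0 : a₁ ≠ 0 := fun h => ha0 (by rw [ha, h, mul_zero])
  have hb₁0 : b₁ ≠ 0 := fun h => hb0 (by rw [hb, h, mul_zero])
  have hrel : IsRelPrime a₁ b₁ := gcd_isUnit_iff_isRelPrime.mp hu
  obtain ⟨U, V, m, hm, hbez⟩ := bezout_int (relprime_coprime hrel ha₁0 hb₁0)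
  set π := m.natAbs with hπdef
  have hπ : 0 < π := Int.natAbs_pos.mpr hm
  obtain ⟨s, hs, Ns, hNs⟩ := ev_sign d hd0
  set e : ℕ → ℤ := fun k => (Int.gcd (a₁.eval (k : ℤ)) (b₁.eval (k : ℤ)) : ℤ) with he
  set P : ℕ → Polynomial ℤ := fun k => C (s * e k) * d with hP
  refine ⟨fun n => (P (n % π)).eval (n : ℤ), ⟨π, hπ, P, fun n => rfl⟩, 1, one_pos,
    fun n => one_dvd _, Ns, fun n hn => ?_⟩
  rw [Int.ediv_one]
  have hsd : ((d.eval (n : ℤ)).natAbs : ℤ) = s * d.eval (n : ℤ) := by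
    have hpos := hNs n hn
    rcases hs with rfl | rfl
    · rw [one_mul] at hpos ⊢; exact Int.natAbs_of_nonneg hpos.le
    · have : d.eval (n : ℤ) < 0 := by nlinarith
      rw [Int.ofNat_natAbs_of_nonpos this.le]; ring
  have hgper := gcd_periodic hm hbez n
  have hea : a.eval (n : ℤ) = d.eval (n : ℤ) * a₁.eval (n : ℤ) := by rw [ha, eval_mul]
  have heb : b.eval (n : ℤ) = d.eval (n : ℤ) * b₁.eval (n : ℤ) := by rw [hb, eval_mul]
  rw [hea, heb, Int.gcd_mul_left]
  push_cast
  have habs : |d.eval (n : ℤ)| = s * d.eval (n : ℤ) := by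
    rw [Int.abs_eq_natAbs]; exact_mod_cast hsd
  rw [habs, hP]
  simp only [eval_mul, eval_C, he]
  rw [← hgper]
  push_cast
  ring
end

section
/- Let q : ℕ → ℤ be an IQ function whose values are O(n) (i.e., |q(n)| ≤ Kn + K for some constant K). Then there exists a positive integer π such that for each residue a mod π, the function n ↦ q(πn + a) is an integral linear polynomial in n: q(πn+a) = αn + β for some α, β ∈ ℤ depending on a. -/
open Polynomial

namespace Polynomial

theorem degree_le_of_forall_abs_eval_natCast_le {P Q : ℤ[X]}
    (h : ∀ n : ℕ, |P.eval (n : ℤ)| ≤ |Q.eval (n : ℤ)|) : P.degree ≤ Q.degree := by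
  by_contra! hlt
  refine Set.infinite_range_of_injective Nat.cast_injective
    ((finite_abs_eval_le_of_degree_lt hlt).subset ?_)
  rintro _ ⟨n, rfl⟩
  exact h n

theorem natDegree_le_one_of_forall_abs_eval_natCast_le {P : ℤ[X]} {A B : ℤ}
    (h : ∀ n : ℕ, |P.eval (n : ℤ)| ≤ A * n + B) : P.natDegree ≤ 1 := by
  have hle : P.degree ≤ (C A * X + C B).degree :=
    degree_le_of_forall_abs_eval_natCast_le fun n =>
      (h n).trans (by simpa using le_abs_self (A * n + B))
  exact natDegree_le_of_degree_le (hle.trans degree_linear_le)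

theorem exists_eval_eq_mul_of_natDegree_le_one {P : ℤ[X]} {d : ℤ} (hP : P.natDegree ≤ 1)
    (h₀ : d ∣ P.eval 0) (h₁ : d ∣ P.eval 1) : ∃ α β : ℤ, ∀ x, P.eval x = d * (α * x + β) := by
  rw [eq_X_add_C_of_natDegree_le_one hP] at h₀ h₁ ⊢
  simp only [eval_add, eval_mul, eval_C, eval_X, mul_zero, zero_add, mul_one] at h₀ h₁ ⊢
  obtain ⟨α, hα⟩ := (dvd_add_left h₀).mp h₁
  obtain ⟨β, hβ⟩ := h₀
  exact ⟨α, β, fun x => by rw [hα, hβ]; ring⟩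

end Polynomial

theorem IsIQ.exists_mul_eq_eval {q : ℕ → ℤ} (hq : IsIQ q) :
    ∃ π : ℕ, 0 < π ∧ ∃ C : ℤ, 0 < C ∧ ∃ P : ℕ → ℤ[X],
      ∀ n : ℕ, C * q n = (P (n % π)).eval (n : ℤ) := by
  obtain ⟨p, ⟨π, hπ, P, hP⟩, C, hC, hCp⟩ := hq
  refine ⟨π, hπ, C, hC, P, fun n => ?_⟩
  rw [(hCp n).2, Int.mul_ediv_cancel' (hCp n).1, hP]

/-- An IQ function of size `O(n)` is, on each residue class mod some period `π`,
an integral linear polynomial: `q(πn + a) = αn + β` with `α, β ∈ ℤ`. -/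
theorem stmt_11 (q : ℕ → ℤ) (hq : IsIQ q)
    (hO : ∃ K : ℕ, ∀ n : ℕ, |q n| ≤ K * n + K) :
    ∃ π : ℕ, 0 < π ∧ ∀ a : ℕ, ∃ α β : ℤ,
      ∀ n : ℕ, q (π * n + a) = α * n + β := by
  obtain ⟨π, hπ, C, hC, P, hP⟩ := hq.exists_mul_eq_eval
  obtain ⟨K, hK⟩ := hO
  refine ⟨π, hπ, fun a => ?_⟩
  set R := (P (a % π)).comp (Polynomial.C (π : ℤ) * X + Polynomial.C (a : ℤ))
  have hR : ∀ n : ℕ, R.eval (n : ℤ) = C * q (π * n + a) := fun n => by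
    rw [hP, Nat.mul_add_mod]
    simp [R]
  have hbound : ∀ n : ℕ, |R.eval (n : ℤ)| ≤ C * K * π * n + C * (K * a + K) := fun n => by
    rw [hR, abs_mul, abs_of_pos hC]
    calc C * |q (π * n + a)| ≤ C * (K * ↑(π * n + a) + K) := by gcongr; exact hK _
      _ = _ := by push_cast; ring
  have hdvd : ∀ n : ℕ, C ∣ R.eval (n : ℤ) := fun n => (hR n).symm ▸ dvd_mul_right C _
  obtain ⟨α, β, hαβ⟩ := exists_eval_eq_mul_of_natDegree_le_one
    (natDegree_le_one_of_forall_abs_eval_natCast_le hbound) (by simpa using hdvd 0)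
    (by simpa using hdvd 1)
  exact ⟨α, β, fun n => mul_left_cancel₀ hC.ne' (by rw [← hR, hαβ])⟩
end

section
/- Let p(n) ∈ ℝ^d be a point whose coordinates are rational functions of n with rational coefficients. Then there exists a positive integer π such that for each residue a mod π, either p(πn+a) ∉ ℤ^d for all sufficiently large n, or there is an integer polynomial vector q ∈ (ℤ[X])^d with p(πn+a) = q(n) for all sufficiently large n. -/
/-!
Each coordinate is `s + u / q` with `s ∈ ℚ[X]` and `deg u < deg q`, so it differs from its
polynomial part `s` by a term that tends to `0` and is either eventually zero or eventually
nonzero. If `π` clears the denominators of all the `s`, then `s (π n + a) = s a + n R(n)` with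
`R ∈ ℤ[X]`. So, up to an integer, `p (π n + a)` is `s a` plus the small term, and since `ℤ` is
discrete in `ℝ` this is eventually an integer only if `s a ∈ ℤ` and the small term eventually
vanishes, in which case `p (π n + a) = s a + n R(n)` is an integer polynomial in `n`.
-/

/-- `f` eventually agrees with a quotient of polynomials with rational coefficients,
with eventually nonvanishing denominator. -/
def IsRatFuncQ (f : ℕ → ℝ) : Prop :=
  ∃ p q : Polynomial ℚ, ∃ N : ℕ, ∀ n ≥ N,
    ((q.eval (n : ℚ) : ℚ) : ℝ) ≠ 0 ∧
      f n = ((p.eval (n : ℚ) : ℚ) : ℝ) / ((q.eval (n : ℚ) : ℚ) : ℝ)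

open Polynomial Filter Topology Set

lemma eventually_mem_range_intCast_imp_eq (c : ℝ) :
    ∀ᶠ x in 𝓝 c, x ∈ range ((↑) : ℤ → ℝ) → x = c := by
  have hclosed : IsClosed (((↑) : ℤ → ℝ) '' {z | (z : ℝ) ≠ c}) :=
    Int.isClosedEmbedding_coe_real.isClosedMap _ (isClosed_discrete _)
  filter_upwards [hclosed.isOpen_compl.mem_nhds (by simp)] with x hx
  rintro ⟨z, rfl⟩
  by_contra h
  exact hx ⟨z, h, rfl⟩

lemma eventually_notMem_range_intCast_or_eventually_eq {α : Type*} {l : Filter α} {g : α → ℝ}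
    {c : ℝ} (hg : Tendsto g l (𝓝 c)) (hdich : (∀ᶠ x in l, g x = c) ∨ ∀ᶠ x in l, g x ≠ c) :
    (∀ᶠ x in l, g x ∉ range ((↑) : ℤ → ℝ)) ∨
      (c ∈ range ((↑) : ℤ → ℝ) ∧ ∀ᶠ x in l, g x = c) := by
  have hint := hg.eventually (eventually_mem_range_intCast_imp_eq c)
  by_cases hc : c ∈ range ((↑) : ℤ → ℝ)
  · refine hdich.symm.imp (fun hne => ?_) (fun heq => ⟨hc, heq⟩)
    filter_upwards [hint, hne] with x h1 h2 hx using h2 (h1 hx)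
  · left
    filter_upwards [hint] with x h1 hx using hc (h1 hx ▸ hx)

lemma eventually_eval_natCast_ne_zero {K : Type*} [Field K] [CharZero K] {u : K[X]} (hu : u ≠ 0) :
    ∀ᶠ n : ℕ in atTop, u.eval (n : K) ≠ 0 := by
  rw [← Nat.cofinite_eq_atTop]
  exact ((u.finite_setOfPred_isRoot hu).preimage Nat.cast_injective.injOn)
    |>.eventually_cofinite_notMem

lemma tendsto_ratCast_eval_div_eval_natCast {u q : ℚ[X]} (h : u.degree < q.degree) :
    Tendsto (fun n : ℕ => ((u.eval (n : ℚ) / q.eval (n : ℚ) : ℚ) : ℝ)) atTop (𝓝 0) := by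
  have := (div_tendsto_atTop_zero_of_degree_lt u q h).comp tendsto_natCast_atTop_atTop
  have h2 := (Rat.continuous_coe_real.tendsto 0).comp this
  rw [Rat.cast_zero] at h2
  exact h2.congr fun n => by simp

lemma IsRatFuncQ.exists_polynomial_part {f : ℕ → ℝ} (hf : IsRatFuncQ f) :
    ∃ s : ℚ[X], Tendsto (fun n => f n - ((s.eval (n : ℚ) : ℚ) : ℝ)) atTop (𝓝 0) ∧
      ((∀ᶠ n in atTop, f n = ((s.eval (n : ℚ) : ℚ) : ℝ)) ∨
        ∀ᶠ n in atTop, f n ≠ ((s.eval (n : ℚ) : ℚ) : ℝ)) := by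
  obtain ⟨P, Q, N, hPQ⟩ := hf
  have hQ : Q ≠ 0 := by
    rintro rfl
    exact (hPQ N le_rfl).1 (by simp)
  have hrem : ∀ᶠ n : ℕ in atTop, f n - (((P / Q).eval (n : ℚ) : ℚ) : ℝ)
      = (((P % Q).eval (n : ℚ) / Q.eval (n : ℚ) : ℚ) : ℝ) := by
    filter_upwards [eventually_ge_atTop N] with n hn
    obtain ⟨hQn, hfn⟩ := hPQ n hn
    have hQn' : Q.eval (n : ℚ) ≠ 0 := by exact_mod_cast hQn
    rw [hfn, ← Rat.cast_div, ← Rat.cast_sub]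
    congr 1
    have hP : P.eval (n : ℚ) = Q.eval (n : ℚ) * (P / Q).eval (n : ℚ) + (P % Q).eval (n : ℚ) := by
      rw [← eval_mul, ← eval_add, EuclideanDomain.div_add_mod]
    rw [hP]
    field_simp
    ring
  refine ⟨P / Q, (tendsto_ratCast_eval_div_eval_natCast (degree_mod_lt P hQ)).congr'
    (hrem.mono fun n h => h.symm), ?_⟩
  by_cases hR : P % Q = 0
  · left
    filter_upwards [hrem] with n hn
    simpa [hR, sub_eq_zero] using hn
  · right
    filter_upwards [hrem, eventually_eval_natCast_ne_zero hR, eventually_eval_natCast_ne_zero hQ]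
      with n hn h1 h2
    rw [← sub_ne_zero, hn]
    exact_mod_cast div_ne_zero h1 h2

lemma exists_pos_nat_forall_mul_mem_lifts {ι : Type*} [Fintype ι] (s : ι → ℚ[X]) :
    ∃ π : ℕ, 0 < π ∧ ∀ i, C (π : ℚ) * s i ∈ lifts (Int.castRingHom ℚ) := by
  choose b hb hbs using fun i => IsLocalization.integerNormalization_spec (nonZeroDivisors ℤ) (s i)
  refine ⟨(∏ i, b i).natAbs, Int.natAbs_pos.mpr (Finset.prod_ne_zero_iff.mpr
    fun i _ => nonZeroDivisors.ne_zero (hb i)), fun i => ?_⟩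
  obtain ⟨k, hk⟩ : b i ∣ ((∏ i, b i).natAbs : ℤ) :=
    Int.dvd_natAbs.mpr (Finset.dvd_prod_of_mem b (Finset.mem_univ i))
  have hmem : C ((b i : ℤ) : ℚ) * s i ∈ lifts (Int.castRingHom ℚ) := by
    rw [mem_lifts]
    refine ⟨_, (hbs i).trans ?_⟩
    rw [zsmul_eq_mul, ← C_eq_intCast]
  rw [← Int.cast_natCast, hk, Int.cast_mul, C_mul, mul_comm (C _), mul_assoc]
  exact base_mul_mem_lifts k hmem

lemma exists_eval_mul_add_eq {R : Type*} [CommRing R] (T : R[X]) (π a : R) :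
    ∃ Q : R[X], ∀ x, T.eval (π * x + a) = T.eval a + π * x * Q.eval x := by
  obtain ⟨Q, hQ⟩ := X_sub_C_dvd_sub_C_eval (p := T) (a := a)
  refine ⟨Q.comp (C π * X + C a), fun x => ?_⟩
  have := congrArg (eval (π * x + a)) hQ
  simp only [eval_sub, eval_C, eval_mul, eval_X] at this
  simp only [eval_comp, eval_add, eval_mul, eval_C, eval_X]
  linear_combination this

lemma exists_intPoly_eval_mul_add {s : ℚ[X]} {π : ℕ} (hπ : 0 < π)
    (hs : C (π : ℚ) * s ∈ lifts (Int.castRingHom ℚ)) (a : ℤ) :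
    ∃ R : ℤ[X], ∀ n : ℤ, s.eval (π * n + a : ℚ) = s.eval (a : ℚ) + n * R.eval n := by
  obtain ⟨T, hT⟩ := (mem_lifts _).mp hs
  obtain ⟨R, hR⟩ := exists_eval_mul_add_eq T π a
  have hTs (x : ℤ) : ((T.eval x : ℤ) : ℚ) = π * s.eval (x : ℚ) := by
    simpa [hT] using (eval_intCast_map (Int.castRingHom ℚ) T x).symm
  refine ⟨R, fun n => mul_left_cancel₀ (Nat.cast_ne_zero.mpr hπ.ne' : (π : ℚ) ≠ 0) ?_⟩
  have := congrArg (Int.cast : ℤ → ℚ) (hR n)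
  push_cast [hTs] at this
  linear_combination this

lemma eventually_notMem_range_intCast_or_eventually_eq_eval {f : ℕ → ℝ} {s : ℚ[X]}
    (hlim : Tendsto (fun n => f n - ((s.eval (n : ℚ) : ℚ) : ℝ)) atTop (𝓝 0))
    (hdich : (∀ᶠ n in atTop, f n = ((s.eval (n : ℚ) : ℚ) : ℝ)) ∨
      ∀ᶠ n in atTop, f n ≠ ((s.eval (n : ℚ) : ℚ) : ℝ))
    {π : ℕ} (hπ : 0 < π) (hs : C (π : ℚ) * s ∈ lifts (Int.castRingHom ℚ)) (a : ℕ) :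
    (∀ᶠ n in atTop, f (π * n + a) ∉ range ((↑) : ℤ → ℝ)) ∨
      ∃ q : ℤ[X], ∀ᶠ n in atTop, f (π * n + a) = ((q.eval (n : ℤ) : ℤ) : ℝ) := by
  obtain ⟨R, hR⟩ := exists_intPoly_eval_mul_add hπ hs a
  set c : ℝ := ((s.eval (a : ℚ) : ℚ) : ℝ)
  set g : ℕ → ℝ := fun n => f (π * n + a) - ((n * R.eval (n : ℤ) : ℤ) : ℝ)
  have hg (n : ℕ) : g n = c + (f (π * n + a) - ((s.eval ((π * n + a : ℕ) : ℚ) : ℚ) : ℝ)) := by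
    have := hR n
    simp only [g, c]
    push_cast at this ⊢
    rw [this]
    push_cast
    ring
  have hshift : Tendsto (fun n : ℕ => π * n + a) atTop atTop :=
    tendsto_atTop_mono (fun n => (Nat.le_mul_of_pos_left n hπ).trans (Nat.le_add_right _ _))
      tendsto_id
  have hg_lim : Tendsto g atTop (𝓝 c) := by
    have := (hlim.comp hshift).const_add c
    rw [add_zero] at this
    exact this.congr fun n => (hg n).symm
  have hg_dich : (∀ᶠ n in atTop, g n = c) ∨ ∀ᶠ n in atTop, g n ≠ c := by
    simpa [hg, sub_eq_zero] using hdich.imp hshift.eventually hshift.eventually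
  refine (eventually_notMem_range_intCast_or_eventually_eq hg_lim hg_dich).imp
    (fun h => h.mono fun n hn ⟨z, hz⟩ => hn ⟨z - n * R.eval (n : ℤ), by simp [g, hz]⟩) ?_
  rintro ⟨⟨z, hz⟩, heq⟩
  refine ⟨C z + X * R, heq.mono fun n hn => ?_⟩
  simp only [g, ← hz] at hn
  simp only [eval_add, eval_C, eval_mul, eval_X]
  push_cast at hn ⊢
  linarith

/-- For a point `p(n) ∈ ℝ^d` with rational-function coordinates there is a period `π`
such that on each residue class mod `π`, either `p(πn+a)` is eventually never an
integer point, or `p(πn+a)` is eventually given by a vector of integer polynomials. -/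
theorem stmt_13 (d : ℕ) (p : ℕ → Fin d → ℝ)
    (hp : ∀ j, IsRatFuncQ (fun n => p n j)) :
    ∃ π : ℕ, 0 < π ∧ ∀ a : ℕ,
      (∃ N : ℕ, ∀ n ≥ N, ¬ ∃ z : Fin d → ℤ, ∀ j, p (π * n + a) j = (z j : ℝ)) ∨
      (∃ q : Fin d → Polynomial ℤ, ∃ N : ℕ, ∀ n ≥ N, ∀ j,
        p (π * n + a) j = (((q j).eval (n : ℤ) : ℤ) : ℝ)) := by
  choose s hs_lim hs_dich using fun j => (hp j).exists_polynomial_part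
  obtain ⟨π, hπ, hlifts⟩ := exists_pos_nat_forall_mul_mem_lifts s
  refine ⟨π, hπ, fun a => ?_⟩
  have key (j : Fin d) := eventually_notMem_range_intCast_or_eventually_eq_eval
    (hs_lim j) (hs_dich j) hπ (hlifts j) a
  by_cases hpoly : ∀ j, ∃ q : ℤ[X], ∀ᶠ n in atTop, p (π * n + a) j = ((q.eval (n : ℤ) : ℤ) : ℝ)
  · right
    choose q hq using hpoly
    obtain ⟨N, hN⟩ := eventually_atTop.mp (eventually_all.mpr hq)
    exact ⟨q, N, fun n hn => hN n hn⟩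
  · left
    obtain ⟨j, hj⟩ := not_forall.mp hpoly
    obtain ⟨N, hN⟩ := eventually_atTop.mp ((key j).resolve_right hj)
    exact ⟨N, fun n hn ⟨z, hz⟩ => hN n hn ⟨z j, (hz j).symm⟩⟩
end

section
/- Let l ∈ ℤ^{d×k} be an integer matrix whose columns l₂, ..., l_k span a full-dimensional cone in ℝ^d (with l₁ = 0), and let v(n) = l·n + b(n) where each entry of b(n) is bounded: |b_{j,i}(n)| ≤ K. Then there exists an integer point p ∈ ℤ^d and N such that for all n ≥ N, p lies in the convex hull of the columns v₁(n), ..., v_k(n), and ‖p − v₁(n)‖ is bounded independent of n. -/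
/-!
The cone spanned by the columns of `l` lies in their linear span, which, as `l₁ = 0`, is the
affine span of the lattice polytope `P = conv(l₁, …, l_k)`; so `P` has nonempty interior.
Rounding a large dilate of an interior point of `P` gives a lattice point `p` whose ball of
radius `K + 1` lies in `n • P` for all large `n`. As `v(n)` moves each vertex of `n • P` by at
most `K`, a separating hyperplane shows that `p` stays in the hull of the `vᵢ(n)`. Finally
`v₁(n) = b₁(n)` is bounded, hence so is `p - v₁(n)`.
-/

open Set Metric Pointwise

section

variable {E : Type*} [NormedAddCommGroup E] [NormedSpace ℝ E]

theorem StrongDual.exists_norm_le_opNorm_mul_le_apply (f : StrongDual ℝ E) {K R : ℝ}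
    (hK : 0 ≤ K) (hKR : K < R) : ∃ z : E, ‖z‖ ≤ R ∧ ‖f‖ * K ≤ f z := by
  have hR : 0 < R := hK.trans_lt hKR
  rcases (norm_nonneg f).eq_or_lt with hf | hf
  · exact ⟨0, by simpa using hR.le, by simp [← hf]⟩
  obtain ⟨z, hz, hfz⟩ := f.exists_lt_apply_of_lt_opNorm
    (r := ‖f‖ * K / R) (by rw [div_lt_iff₀ hR]; gcongr)
  rw [div_lt_iff₀ hR, Real.norm_eq_abs] at hfz
  have hRz : ‖R • z‖ ≤ R := by
    rw [norm_smul, Real.norm_of_nonneg hR.le]; nlinarith [norm_nonneg z]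
  rcases le_or_gt 0 (f z) with hpos | hneg
  · refine ⟨R • z, hRz, ?_⟩
    rw [map_smul, smul_eq_mul]; nlinarith [abs_of_nonneg hpos]
  · refine ⟨-(R • z), by rwa [norm_neg], ?_⟩
    rw [map_neg, map_smul, smul_eq_mul]; nlinarith [abs_of_neg hneg]

/-- If `f < u` on `convexHull (range w')`, then `f ≤ u + ‖f‖ * K` on `convexHull (range w)`, while
the ball of radius `R > K` around `x` reaches beyond that level. -/
theorem mem_convexHull_range_of_closedBall_subset {ι : Type*} [Finite ι] {w w' : ι → E} {x : E}
    {K R : ℝ} (hK : 0 ≤ K) (hKR : K < R) (hball : closedBall x R ⊆ convexHull ℝ (range w))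
    (hdist : ∀ i, ‖w i - w' i‖ ≤ K) : x ∈ convexHull ℝ (range w') := by
  by_contra hx
  obtain ⟨f, u, hfw', hfx⟩ := geometric_hahn_banach_closed_point (convex_convexHull ℝ _)
    ((finite_range w').isClosed_convexHull (𝕜 := ℝ)) hx
  have hfw : ∀ i, f (w i) ≤ u + ‖f‖ * K := fun i => by
    have h₁ := hfw' _ (subset_convexHull ℝ _ (mem_range_self i))
    have h₂ := (le_abs_self _).trans ((f.le_opNorm (w i - w' i)).trans
      (mul_le_mul_of_nonneg_left (hdist i) (norm_nonneg f)))
    rw [map_sub] at h₂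
    linarith
  have hhull : convexHull ℝ (range w) ⊆ {y | f y ≤ u + ‖f‖ * K} :=
    convexHull_min (range_subset_iff.2 hfw) (convex_halfSpace_le f.toLinearMap.isLinear _)
  obtain ⟨z, hzR, hfz⟩ := f.exists_norm_le_opNorm_mul_le_apply hK hKR
  have hxz : x + z ∈ closedBall x R := by simpa [dist_eq_norm] using hzR
  have := hhull (hball hxz)
  simp only [mem_ofPred_eq, map_add] at this
  linarith

theorem interior_convexHull_nonempty_of_interior_cone_nonempty [FiniteDimensional ℝ E]
    {ι : Type*} [Fintype ι] {L : ι → E} (hL : 0 ∈ range L)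
    (hcone : (interior {x | ∃ c : ι → ℝ, (∀ i, 0 ≤ c i) ∧ x = ∑ i, c i • L i}).Nonempty) :
    (interior (convexHull ℝ (range L))).Nonempty := by
  have hspan : Submodule.span ℝ (range L) = ⊤ := by
    refine Submodule.eq_top_of_nonempty_interior' _ (hcone.mono (interior_mono ?_))
    rintro _ ⟨c, -, rfl⟩
    exact Submodule.sum_mem _ fun i _ => Submodule.smul_mem _ _ (Submodule.subset_span ⟨i, rfl⟩)
  rw [interior_convexHull_nonempty_iff_affineSpan_eq_top,
    AffineSubspace.affineSpan_eq_top_iff_vectorSpan_eq_top_of_nonempty ℝ E E ⟨0, hL⟩,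
    vectorSpan_eq_span_vsub_set_right ℝ hL]
  simpa using hspan

theorem Convex.smul_subset_smul_of_zero_mem {s : Set E} (hs : Convex ℝ s) (h0 : (0 : E) ∈ s)
    {a b : ℝ} (ha : 0 ≤ a) (hab : a ≤ b) : a • s ⊆ b • s := by
  rcases ha.eq_or_lt with rfl | ha
  · rw [zero_smul_set ⟨0, h0⟩, zero_subset]
    exact ⟨0, h0, smul_zero b⟩
  rintro _ ⟨x, hx, rfl⟩
  have hb : 0 < b := ha.trans_le hab
  refine ⟨(a / b) • x,
    hs.smul_mem_of_zero_mem h0 hx ⟨by positivity, div_le_one_of_le₀ hab hb.le⟩, ?_⟩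
  simp only [smul_smul, mul_div_cancel₀ _ hb.ne']

end

theorem exists_int_closedBall_subset_nat_smul {d : ℕ} {P : Set (Fin d → ℝ)} (hP : Convex ℝ P)
    (h0 : (0 : Fin d → ℝ) ∈ P) (hint : (interior P).Nonempty) (R : ℝ) :
    ∃ p : Fin d → ℤ, ∃ N : ℕ, ∀ n ≥ N,
      closedBall (fun j => (p j : ℝ)) R ⊆ (n : ℝ) • P := by
  obtain ⟨x₀, hx₀⟩ := hint
  obtain ⟨r, hr, hrP⟩ := nhds_basis_closedBall.mem_iff.1 (mem_interior_iff_mem_nhds.1 hx₀)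
  set t := (|R| + 1) / r with ht
  have ht0 : 0 < t := by positivity
  refine ⟨fun j => round (t * x₀ j), ⌈t⌉₊, fun n hn => ?_⟩
  have hround : dist (fun j => (round (t * x₀ j) : ℝ)) (t • x₀) ≤ 1 / 2 :=
    (dist_pi_le_iff (by norm_num)).2 fun j => by
      simpa [Real.dist_eq, abs_sub_comm] using abs_sub_round (t * x₀ j)
  calc closedBall (fun j => (round (t * x₀ j) : ℝ)) R
      ⊆ closedBall (t • x₀) (t * r) := closedBall_subset_closedBall' (by
        rw [ht, div_mul_cancel₀ _ hr.ne']; linarith [le_abs_self R])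
    _ = t • closedBall x₀ r := by
        rw [smul_closedBall _ _ hr.le, Real.norm_of_nonneg ht0.le]
    _ ⊆ t • P := smul_set_mono hrP
    _ ⊆ (n : ℝ) • P := hP.smul_subset_smul_of_zero_mem h0 ht0.le
        ((Nat.le_ceil t).trans (by exact_mod_cast hn))

/-- Let `l` be an integer matrix with first column zero whose remaining columns span a
full-dimensional cone in `ℝ^d`, and let `v(n) = n·l + b(n)` with `b` uniformly bounded.
Then there is an integer point `p` that, for all sufficiently large `n`, lies in the
convex hull of the columns of `v(n)` and stays at uniformly bounded distance from the
first column `v₀(n)`. -/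
theorem stmt_14 (d k : ℕ) (l : Fin (k + 1) → Fin d → ℤ)
    (hl0 : l 0 = 0)
    (hfull : (interior {x : Fin d → ℝ | ∃ c : Fin (k + 1) → ℝ,
      (∀ i, 0 ≤ c i) ∧ x = ∑ i, c i • (fun j => (l i j : ℝ))}).Nonempty)
    (b : ℕ → Fin (k + 1) → Fin d → ℝ) (K : ℝ)
    (hb : ∀ n i j, |b n i j| ≤ K)
    (v : ℕ → Fin (k + 1) → Fin d → ℝ)
    (hv : ∀ n i j, v n i j = (n : ℝ) * (l i j : ℝ) + b n i j) :
    ∃ p : Fin d → ℤ, ∃ C : ℝ, ∃ N : ℕ, ∀ n ≥ N,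
      (fun j => (p j : ℝ)) ∈ convexHull ℝ (Set.range (v n)) ∧
      ∀ j, |(p j : ℝ) - v n 0 j| ≤ C := by
  set L : Fin (k + 1) → Fin d → ℝ := fun i j => (l i j : ℝ)
  have hL0 : L 0 = 0 := by ext j; simp [L, hl0]
  -- `K` itself may be negative when `d = 0`
  set K' := max K 0
  have hbK : ∀ n i j, |b n i j| ≤ K' := fun n i j => (hb n i j).trans (le_max_left K 0)
  obtain ⟨p, N, hp⟩ := exists_int_closedBall_subset_nat_smul (convex_convexHull ℝ (range L))
    (hL0 ▸ subset_convexHull ℝ _ (mem_range_self 0))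
    (interior_convexHull_nonempty_of_interior_cone_nonempty ⟨0, hL0⟩ hfull) (K' + 1)
  refine ⟨p, ‖fun j => (p j : ℝ)‖ + K', N, fun n hn => ⟨?_, fun j => ?_⟩⟩
  · refine mem_convexHull_range_of_closedBall_subset (w := fun i => (n : ℝ) • L i)
      (le_max_right K 0) (lt_add_one K') ?_ fun i => ?_
    · rw [← smul_set_range, convexHull_smul]
      exact hp n hn
    · refine (pi_norm_le_iff_of_nonneg (le_max_right K 0)).2 fun j => ?_
      rw [Real.norm_eq_abs, show ((n : ℝ) • L i - v n i) j = -b n i j by simp [hv, L], abs_neg]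
      exact hbK n i j
  · calc |(p j : ℝ) - v n 0 j| = |(p j : ℝ) - b n 0 j| := by simp [hv, hl0]
      _ ≤ |(p j : ℝ)| + |b n 0 j| := abs_sub _ _
      _ ≤ ‖fun j => (p j : ℝ)‖ + K' :=
        add_le_add (norm_le_pi_norm (fun j => (p j : ℝ)) j) (hbK n 0 j)
end

section
/- (Quasirationality of scl along a bounded family, abstract polyhedral version.) Let K(n) ⊂ ℝ^d be a family of polyhedral cones whose extremal rays are spanned by vectors with integral linear coordinates in n, let κ_n : K(n) → ℝ be the function linear on rays, equal to 1 on the boundary of conv(D(n) + K(n)) where D(n) is the set of integer points in specified open faces of K(n), and suppose the vertices of this 'sail' are given for n ≫ 0 (after passing to a residue class mod some π) by integer polynomial vectors. Then for a fixed rational linear functional L and fixed rational vector w(n) with integral linear coordinates in K(n), the minimum over the fiber {y ∈ K(n) : d(y) = w(n)} (for a fixed rational linear map d) of κ_n(y) − L(y) is, for all sufficiently large n in each residue class mod some period, a ratio of two integer polynomials in n; i.e., the minimum is a quasirational function of n. -/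
/-- `f : ℕ → ℝ` is eventually quasirational: a ratio of two integral
quasipolynomials for all sufficiently large `n`. -/
def IsEventuallyQR (f : ℕ → ℝ) : Prop :=
  ∃ p q : ℕ → ℤ, IsQuasiPoly p ∧ IsQuasiPoly q ∧ ∃ N : ℕ, ∀ n ≥ N,
    ((q n : ℝ) ≠ 0 ∧ f n = (p n : ℝ) / (q n : ℝ))

/-!
Along a fixed residue class of `n`, all the data are rational functions of `n`. Writing
`y = ∑ cᵢ rᵢ(n)` over the rays turns the problem into minimising the concave function
`c ↦ minᵢ gᵢ(n) ⬝ c` over the polyhedron `{c ≥ 0 | c A(n) = w(n)}`. Its minimum is attained by a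
single linear piece at a basic solution, whose support rows of `A(n)` are linearly independent;
Cramer's rule for the Gram matrix of these rows gives that solution as a rational function of `n`.
There are finitely many (piece, support) candidates, and since a rational function of `n` has
eventually constant sign, their feasibility and their mutual comparisons are eventually constant
along the residue class. Hence one candidate realises the minimum for all large `n` in the class.
-/

open Polynomial Filter Matrix Topology

theorem Polynomial.eventually_sign_eval {𝕜 : Type*} [NormedField 𝕜] [LinearOrder 𝕜]
    [IsStrictOrderedRing 𝕜] [OrderTopology 𝕜] (P : 𝕜[X]) :
    ∀ᶠ x in atTop, SignType.sign (P.eval x) = SignType.sign P.leadingCoeff := by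
  have hx : ∀ᶠ x : 𝕜 in atTop, 0 < x := eventually_gt_atTop 0
  rcases lt_trichotomy P.leadingCoeff 0 with h | h | h
  · filter_upwards [P.isEquivalent_atTop_lead.eventually_neg
      (hx.mono fun x hx => mul_neg_of_neg_of_pos h (pow_pos hx _))] with x hPx
    rw [sign_neg hPx, sign_neg h]
  · simp [leadingCoeff_eq_zero.1 h]
  · filter_upwards [P.isEquivalent_atTop_lead.eventually_pos
      (hx.mono fun x hx => mul_pos h (pow_pos hx _))] with x hPx
    rw [sign_pos hPx, sign_pos h]

theorem Polynomial.eventually_sign_aeval_natCast (P : ℤ[X]) :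
    ∀ᶠ n : ℕ in atTop, SignType.sign (aeval (n : ℝ) P) = SignType.sign (P.leadingCoeff : ℝ) := by
  filter_upwards [tendsto_natCast_atTop_atTop.eventually
    (P.map (algebraMap ℤ ℝ)).eventually_sign_eval] with n hn
  rwa [leadingCoeff_map_of_injective (RingHom.injective_int _), eval_map_algebraMap] at hn

theorem Polynomial.aeval_natCast_eq_intCast_eval (P : ℤ[X]) (n : ℕ) :
    aeval (n : ℝ) P = ((P.eval (n : ℤ) : ℤ) : ℝ) := by
  simp [aeval_def, eval₂_eq_eval_map]

theorem sign_div {α : Type*} [Field α] [LinearOrder α] [IsStrictOrderedRing α]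
    (a b : α) : SignType.sign (a / b) = SignType.sign a * SignType.sign b := by
  rw [div_eq_mul_inv, sign_mul]
  congr 1
  rcases lt_trichotomy b 0 with h | rfl | h
  · rw [sign_neg h, sign_neg (inv_lt_zero.2 h)]
  · simp
  · rw [sign_pos h, sign_pos (inv_pos.2 h)]

theorem Filter.EventuallyConst.forall {α ι : Type*} [Finite ι] {l : Filter α}
    {p : ι → α → Prop} (h : ∀ i, EventuallyConst (p i) l) :
    EventuallyConst (fun x => ∀ i, p i x) l := by
  simp only [eventuallyConst_pred] at h ⊢
  by_cases hall : ∀ i, ∀ᶠ x in l, p i x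
  · exact Or.inl (eventually_all.2 hall)
  · obtain ⟨i, hi⟩ := not_forall.1 hall
    exact Or.inr (((h i).resolve_left hi).mono fun x hx hall => hx (hall i))

section BasicSolution

variable {ι κ : Type*}

theorem linearIndepOn_iff_vecMul_eq_zero [Fintype ι] {R : Type*} [Ring R] {A : Matrix ι κ R}
    {s : Set ι} : LinearIndepOn R (fun i => A i) s ↔
      ∀ z : ι → R, Function.support z ⊆ s → z ᵥ* A = 0 → z = 0 := by
  classical
  rw [linearIndepOn_iff'']
  refine ⟨fun h z hzs hz => funext fun i => ?_, fun h t g hts hgt hsum i _ => ?_⟩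
  · by_contra hi
    refine hi (h (Finset.univ.filter (z · ≠ 0)) z (fun j hj => hzs (by simpa using hj))
      (fun j hj => by simpa using hj) ?_ i (by simpa using hi))
    rw [← hz, vecMul_eq_sum]
    exact Finset.sum_subset (Finset.subset_univ _) fun j _ hj => by simp_all
  · refine congrFun (h g (fun j hj => hts ?_) ?_) i
    · by_contra hjt
      exact hj (hgt j hjt)
    · rw [vecMul_eq_sum, ← hsum]
      exact (Finset.sum_subset (Finset.subset_univ t) fun j _ hj => by simp [hgt j hj]).symm

/-- Fermat's rule for the affine function `t ↦ g ⬝ᵥ (c + t • z)`, which is minimal at `t = 0`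
because `c + t • z` stays feasible for small `|t|`. -/
theorem dotProduct_eq_zero_of_isMinOn [Fintype ι] {A : Matrix ι κ ℝ} {g c z : ι → ℝ}
    (hc : 0 ≤ c) (hmin : IsMinOn (g ⬝ᵥ ·) {x | 0 ≤ x ∧ x ᵥ* A = c ᵥ* A} c)
    (hzA : z ᵥ* A = 0) (hzc : Function.support z ⊆ Function.support c) : g ⬝ᵥ z = 0 := by
  have hfeas : ∀ᶠ t in 𝓝 (0 : ℝ), 0 ≤ c + t • z := by
    simp only [Pi.le_def, Pi.zero_apply, Pi.add_apply, Pi.smul_apply, smul_eq_mul]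
    refine eventually_all.2 fun i => ?_
    by_cases hzi : z i = 0
    · exact .of_forall fun t => by simpa [hzi] using hc i
    · have hci : 0 < c i := (hc i).lt_of_ne' (hzc hzi)
      exact (ContinuousAt.eventually_lt (by fun_prop) (by fun_prop) (by simpa using hci)).mono
        fun t ht => ht.le
  have hlocal : IsLocalMin (fun t : ℝ => g ⬝ᵥ (c + t • z)) 0 := by
    filter_upwards [hfeas] with t ht
    simpa using isMinOn_iff.1 hmin _ ⟨ht, by rw [add_vecMul, smul_vecMul, hzA, smul_zero, add_zero]⟩
  have hderiv : HasDerivAt (fun t : ℝ => g ⬝ᵥ (c + t • z)) (g ⬝ᵥ z) 0 := by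
    simp only [dotProduct_add, dotProduct_smul, smul_eq_mul]
    simpa using ((hasDerivAt_id (0 : ℝ)).mul_const (g ⬝ᵥ z)).const_add (g ⬝ᵥ c)
  exact hlocal.hasDerivAt_eq_zero hderiv

theorem exists_add_smul_nonneg_support_ssubset [Fintype ι] {c z : ι → ℝ} (hc : 0 ≤ c)
    (hzc : Function.support z ⊆ Function.support c) (hz : z ≠ 0) :
    ∃ t : ℝ, 0 ≤ c + t • z ∧ Function.support (c + t • z) ⊂ Function.support c := by
  classical
  wlog hneg : ∃ i, z i < 0 generalizing z with H
  · obtain ⟨i, hi⟩ := Function.ne_iff.1 hz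
    obtain ⟨t, ht, hts⟩ := H (z := -z) (by simpa using hzc) (neg_ne_zero.2 hz)
      ⟨i, neg_neg_of_pos ((not_lt.1 fun h => hneg ⟨i, h⟩).lt_of_ne' hi)⟩
    exact ⟨-t, by simpa using ht, by simpa using hts⟩
  obtain ⟨i₀, hi₀, hmin⟩ := Finset.exists_min_image (Finset.univ.filter (z · < 0))
    (fun i => c i / -z i) (by simpa [Finset.Nonempty] using hneg)
  have hzi₀ : z i₀ < 0 := by simpa using hi₀
  refine ⟨c i₀ / -z i₀, fun j => ?_, ?_⟩
  · rcases lt_or_ge (z j) 0 with hzj | hzj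
    · have := (le_div_iff₀ (neg_pos.2 hzj)).1 (hmin j (by simpa using hzj))
      simp only [Pi.zero_apply, Pi.add_apply, Pi.smul_apply, smul_eq_mul]
      linarith [mul_neg (c i₀ / -z i₀) (z j)]
    · simp only [Pi.zero_apply, Pi.add_apply, Pi.smul_apply, smul_eq_mul]
      exact add_nonneg (hc j) (mul_nonneg (div_nonneg (hc i₀) (neg_pos.2 hzi₀).le) hzj)
  · refine (Set.ssubset_iff_of_subset fun j hj => ?_).2 ⟨i₀, hzc hzi₀.ne, ?_⟩
    · by_contra hcj
      have hzj : z j = 0 := Function.notMem_support.1 fun h => hcj (hzc h)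
      exact hj (by simp_all)
    · rw [Function.mem_support, not_not, Pi.add_apply, Pi.smul_apply, smul_eq_mul,
        div_mul_eq_mul_div, div_neg, mul_div_cancel_right₀ _ hzi₀.ne, add_neg_cancel]

theorem exists_linearIndepOn_support_of_isMinOn [Fintype ι] {A : Matrix ι κ ℝ} {g c : ι → ℝ}
    (hc : 0 ≤ c) (hmin : IsMinOn (g ⬝ᵥ ·) {x | 0 ≤ x ∧ x ᵥ* A = c ᵥ* A} c) :
    ∃ c', 0 ≤ c' ∧ c' ᵥ* A = c ᵥ* A ∧ g ⬝ᵥ c' = g ⬝ᵥ c ∧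
      LinearIndepOn ℝ (fun i => A i) (Function.support c') := by
  induction hN : (Function.support c).ncard using Nat.strong_induction_on generalizing c with
  | _ N ih =>
  by_cases hli : LinearIndepOn ℝ (fun i => A i) (Function.support c)
  · exact ⟨c, hc, rfl, rfl, hli⟩
  obtain ⟨z, hzc, hzA, hz⟩ :
      ∃ z, Function.support z ⊆ Function.support c ∧ z ᵥ* A = 0 ∧ z ≠ 0 := by
    simpa [linearIndepOn_iff_vecMul_eq_zero] using hli
  obtain ⟨t, hct, hss⟩ := exists_add_smul_nonneg_support_ssubset hc hzc hz
  have hA : (c + t • z) ᵥ* A = c ᵥ* A := by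
    rw [add_vecMul, smul_vecMul, hzA, smul_zero, add_zero]
  have hg : g ⬝ᵥ (c + t • z) = g ⬝ᵥ c := by
    rw [dotProduct_add, dotProduct_smul, dotProduct_eq_zero_of_isMinOn hc hmin hzA hzc,
      smul_zero, add_zero]
  have hmin' : IsMinOn (g ⬝ᵥ ·) {x | 0 ≤ x ∧ x ᵥ* A = (c + t • z) ᵥ* A} (c + t • z) := by
    rw [hA]
    exact isMinOn_iff.2 fun x hx => hg.trans_le (isMinOn_iff.1 hmin x hx)
  obtain ⟨c', hc', hc'A, hc'g, hli'⟩ := ih _ (hN ▸ Set.ncard_lt_ncard hss) hct hmin' rfl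
  exact ⟨c', hc', hc'A.trans hA, hc'g.trans hg, hli'⟩

variable [Fintype κ] [DecidableEq ι]

def rowGram (A : Matrix ι κ ℝ) (S : Finset ι) : Matrix S S ℝ :=
  of fun a b => A a ⬝ᵥ A b

/-- The solution of `x ᵥ* A = w` supported on `S`, by Cramer's rule for `rowGram A S`; it is
meaningful only when the rows indexed by `S` are independent (otherwise the determinant is `0` and
so is every entry). -/
noncomputable def basicSolution (A : Matrix ι κ ℝ) (w : κ → ℝ) (S : Finset ι) (i : ι) : ℝ :=
  if h : i ∈ S then cramer (rowGram A S) (fun a => A a ⬝ᵥ w) ⟨i, h⟩ / (rowGram A S).det else 0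

theorem det_rowGram_ne_zero {A : Matrix ι κ ℝ} {S : Finset ι}
    (hS : LinearIndepOn ℝ (fun i => A i) ↑S) : (rowGram A S).det ≠ 0 := by
  let B : Matrix S κ ℝ := of fun a => A a
  have hG : rowGram A S = Bᵀᵀ * Bᵀ := rfl
  rw [Ne, ← exists_mulVec_eq_zero_iff]
  rintro ⟨x, hx0, hGx⟩
  have hBx : x ᵥ* B = 0 := by
    have : x ∈ LinearMap.ker (Bᵀᵀ * Bᵀ).mulVecLin := by
      rwa [LinearMap.mem_ker, mulVecLin_apply, ← hG]
    rw [ker_mulVecLin_transpose_mul_self] at this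
    simpa [vecMul_transpose] using this
  exact hx0 (funext (Fintype.linearIndependent_iff.1 hS x ((vecMul_eq_sum x B).symm.trans hBx)))

theorem basicSolution_vecMul [Fintype ι] {A : Matrix ι κ ℝ} {S : Finset ι}
    (hS : LinearIndepOn ℝ (fun i => A i) ↑S) {c : ι → ℝ} (hc : Function.support c ⊆ ↑S) :
    basicSolution A (c ᵥ* A) S = c := by
  funext i
  unfold basicSolution
  split_ifs with hi
  · let B : Matrix S κ ℝ := of fun a => A a
    let x : S → ℝ := fun a => c a
    have hcA : c ᵥ* A = x ᵥ* B := calc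
      c ᵥ* A = ∑ j ∈ S, c j • A j := by
        rw [vecMul_eq_sum]
        exact (Finset.sum_subset (Finset.subset_univ S) fun j _ hj => by
          simp [Function.notMem_support.1 fun h => hj (hc h)]).symm
      _ = x ᵥ* B := by rw [vecMul_eq_sum]; exact (Finset.sum_coe_sort S fun j => c j • A j).symm
    have hrhs : (fun a : S => A a ⬝ᵥ (c ᵥ* A)) = rowGram A S *ᵥ x := by
      rw [hcA, show rowGram A S = B * Bᵀ from rfl, ← mulVec_mulVec, mulVec_transpose]
      rfl
    rw [hrhs, cramer_eq_adjugate_mulVec, mulVec_mulVec, adjugate_mul, smul_mulVec, one_mulVec,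
      Pi.smul_apply, smul_eq_mul, mul_div_cancel_left₀ _ (det_rowGram_ne_zero hS)]
  · exact (Function.notMem_support.1 fun h => hi (hc h)).symm

theorem isLeast_image_basicSolution [Fintype ι] {ι' : Type*} [Fintype ι'] [Nonempty ι']
    {A : Matrix ι κ ℝ} {w : κ → ℝ} {g : ι' → ι → ℝ} {μ : ℝ}
    (hμ : IsLeast {z | ∃ c, 0 ≤ c ∧ c ᵥ* A = w ∧
      z = Finset.univ.inf' Finset.univ_nonempty fun i => g i ⬝ᵥ c} μ) :
    IsLeast ((fun σ : ι' × Finset ι => g σ.1 ⬝ᵥ basicSolution A w σ.2) ''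
      {σ | 0 ≤ basicSolution A w σ.2 ∧ basicSolution A w σ.2 ᵥ* A = w}) μ := by
  obtain ⟨⟨c, hc, hcw, rfl⟩, hlow⟩ := hμ
  refine ⟨?_, ?_⟩
  · obtain ⟨i, -, hi⟩ := Finset.exists_mem_eq_inf' Finset.univ_nonempty fun i => g i ⬝ᵥ c
    have hmin : IsMinOn (g i ⬝ᵥ ·) {x | 0 ≤ x ∧ x ᵥ* A = c ᵥ* A} c :=
      isMinOn_iff.2 fun x ⟨hx, hxA⟩ => hi ▸ (hlow ⟨x, hx, hxA.trans hcw, rfl⟩).trans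
        (Finset.inf'_le _ (Finset.mem_univ i))
    obtain ⟨c', hc', hc'A, hc'g, hli⟩ := exists_linearIndepOn_support_of_isMinOn hc hmin
    set S := (Set.toFinite (Function.support c')).toFinset
    have hbs : basicSolution A w S = c' := by
      rw [← hcw, ← hc'A]
      exact basicSolution_vecMul (by simpa [S] using hli) (by simp [S])
    refine ⟨(i, S), ⟨?_, ?_⟩, ?_⟩ <;> dsimp only <;> rw [hbs]
    exacts [hc', hc'A.trans hcw, hc'g.trans hi.symm]
  · rintro _ ⟨σ, ⟨hσ, hσA⟩, rfl⟩
    exact (hlow ⟨_, hσ, hσA, rfl⟩).trans (Finset.inf'_le _ (Finset.mem_univ σ.1))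

end BasicSolution

def eventuallyRational (l : Filter ℕ) : Subring (ℕ → ℝ) where
  carrier := {f | ∃ P Q : ℤ[X], ∀ᶠ n : ℕ in l,
    aeval (n : ℝ) Q ≠ 0 ∧ f n = aeval (n : ℝ) P / aeval (n : ℝ) Q}
  zero_mem' := ⟨0, 1, .of_forall fun n => by simp⟩
  one_mem' := ⟨1, 1, .of_forall fun n => by simp⟩
  add_mem' := by
    rintro f g ⟨P, Q, hf⟩ ⟨P', Q', hg⟩
    refine ⟨P * Q' + P' * Q, Q * Q', ?_⟩
    filter_upwards [hf, hg] with n ⟨hQ, hfn⟩ ⟨hQ', hgn⟩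
    simp only [map_add, map_mul, Pi.add_apply, hfn, hgn]
    exact ⟨mul_ne_zero hQ hQ', by field_simp⟩
  mul_mem' := by
    rintro f g ⟨P, Q, hf⟩ ⟨P', Q', hg⟩
    refine ⟨P * P', Q * Q', ?_⟩
    filter_upwards [hf, hg] with n ⟨hQ, hfn⟩ ⟨hQ', hgn⟩
    simp only [map_mul, Pi.mul_apply, hfn, hgn]
    exact ⟨mul_ne_zero hQ hQ', div_mul_div_comm _ _ _ _⟩
  neg_mem' := by
    rintro f ⟨P, Q, hf⟩
    refine ⟨-P, Q, ?_⟩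
    filter_upwards [hf] with n ⟨hQ, hfn⟩
    simp only [map_neg, Pi.neg_apply, hfn]
    exact ⟨hQ, (neg_div _ _).symm⟩

namespace eventuallyRational

variable {l : Filter ℕ} {f g : ℕ → ℝ}

theorem mem_of_eventuallyEq (hf : f ∈ eventuallyRational l) (h : f =ᶠ[l] g) :
    g ∈ eventuallyRational l := by
  obtain ⟨P, Q, hf⟩ := hf
  exact ⟨P, Q, by filter_upwards [hf, h] with n hfn hn; rwa [← hn]⟩

theorem mem_of_le {l' : Filter ℕ} (hf : f ∈ eventuallyRational l) (h : l' ≤ l) :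
    f ∈ eventuallyRational l' := by
  obtain ⟨P, Q, hf⟩ := hf
  exact ⟨P, Q, hf.filter_mono h⟩

theorem mem_bot : f ∈ eventuallyRational ⊥ := ⟨0, 1, by simp⟩

theorem natCast_mem : (fun n : ℕ => (n : ℝ)) ∈ eventuallyRational l :=
  ⟨X, 1, .of_forall fun n => by simp⟩

theorem intCast_mem (a : ℤ) : (fun _ => (a : ℝ)) ∈ eventuallyRational l :=
  ⟨C a, 1, .of_forall fun n => by simp⟩

theorem ratCast_mem (q : ℚ) : (fun _ => (q : ℝ)) ∈ eventuallyRational l :=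
  ⟨C q.num, C (q.den : ℤ), .of_forall fun n => by simp [Rat.cast_def]⟩

theorem dotProduct_mem {ι : Type*} [Fintype ι] {x y : ℕ → ι → ℝ}
    (hx : ∀ i, (fun n => x n i) ∈ eventuallyRational l)
    (hy : ∀ i, (fun n => y n i) ∈ eventuallyRational l) :
    (fun n => x n ⬝ᵥ y n) ∈ eventuallyRational l := by
  have : (fun n => x n ⬝ᵥ y n) = ∑ i, (fun n => x n i) * fun n => y n i := by
    funext n
    simp [dotProduct]
  rw [this]
  exact sum_mem fun i _ => mul_mem (hx i) (hy i)

theorem det_mem {ι : Type*} [Fintype ι] [DecidableEq ι] {M : ℕ → Matrix ι ι ℝ}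
    (hM : ∀ i j, (fun n => M n i j) ∈ eventuallyRational l) :
    (fun n => (M n).det) ∈ eventuallyRational l := by
  have hdet : (fun n => (M n).det) =
      ∑ σ : Equiv.Perm ι, (Equiv.Perm.sign σ : ℤ) • ∏ i, fun n => M n (σ i) i := by
    funext n
    simp [Matrix.det_apply, Finset.sum_apply, Finset.prod_apply, Units.smul_def]
  rw [hdet]
  exact sum_mem fun σ _ => zsmul_mem (prod_mem fun i _ => hM _ _) _

section AtTop

variable (hl : l ≤ atTop)
include hl

theorem eventuallyConst_sign (hf : f ∈ eventuallyRational l) :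
    EventuallyConst (fun n => SignType.sign (f n)) l := by
  obtain ⟨P, Q, hf⟩ := hf
  refine eventuallyConst_iff_exists_eventuallyEq.2
    ⟨SignType.sign (P.leadingCoeff : ℝ) * SignType.sign (Q.leadingCoeff : ℝ), ?_⟩
  filter_upwards [hf, hl P.eventually_sign_aeval_natCast, hl Q.eventually_sign_aeval_natCast]
    with n ⟨_, hfn⟩ hP hQ
  rw [hfn, sign_div, hP, hQ]

theorem eventuallyConst_nonneg (hf : f ∈ eventuallyRational l) :
    EventuallyConst (fun n => 0 ≤ f n) l := by
  simpa only [Function.comp_def, sign_nonneg_iff] using (eventuallyConst_sign hl hf).comp (0 ≤ ·)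

theorem eventuallyConst_le (hf : f ∈ eventuallyRational l) (hg : g ∈ eventuallyRational l) :
    EventuallyConst (fun n => f n ≤ g n) l := by
  simpa only [Pi.sub_apply, sub_nonneg] using eventuallyConst_nonneg hl (sub_mem hg hf)

theorem eventuallyConst_eq (hf : f ∈ eventuallyRational l) (hg : g ∈ eventuallyRational l) :
    EventuallyConst (fun n => f n = g n) l := by
  simpa only [Function.comp_def, Pi.sub_apply, sign_eq_zero_iff, sub_eq_zero] using
    (eventuallyConst_sign hl (sub_mem hf hg)).comp (· = 0)

theorem eventuallyConst_pi_nonneg {ι : Type*} [Finite ι] {x : ℕ → ι → ℝ}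
    (hx : ∀ i, (fun n => x n i) ∈ eventuallyRational l) :
    EventuallyConst (fun n => 0 ≤ x n) l := by
  simpa only [Pi.le_def, Pi.zero_apply] using
    EventuallyConst.forall fun i => eventuallyConst_nonneg hl (hx i)

theorem eventuallyConst_pi_eq {ι : Type*} [Finite ι] {x y : ℕ → ι → ℝ}
    (hx : ∀ i, (fun n => x n i) ∈ eventuallyRational l)
    (hy : ∀ i, (fun n => y n i) ∈ eventuallyRational l) :
    EventuallyConst (fun n => x n = y n) l := by
  simpa only [funext_iff] using EventuallyConst.forall fun i => eventuallyConst_eq hl (hx i) (hy i)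

theorem div_mem (hf : f ∈ eventuallyRational l) (hg : g ∈ eventuallyRational l) :
    (fun n => f n / g n) ∈ eventuallyRational l := by
  obtain ⟨P, Q, hf⟩ := hf
  obtain ⟨P', Q', hg⟩ := hg
  by_cases hP' : P' = 0
  · refine ⟨0, 1, ?_⟩
    filter_upwards [hg] with n ⟨_, hgn⟩
    simp [hgn, hP']
  · refine ⟨P * Q', Q * P', ?_⟩
    filter_upwards [hf, hg, hl P'.eventually_sign_aeval_natCast] with n ⟨hQ, hfn⟩ ⟨hQ', hgn⟩ hsign
    have hP'n : aeval (n : ℝ) P' ≠ 0 := by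
      rw [← sign_ne_zero, hsign, sign_ne_zero, Int.cast_ne_zero, Ne, leadingCoeff_eq_zero]
      exact hP'
    simp only [map_mul, hfn, hgn]
    exact ⟨mul_ne_zero hQ hP'n, by field_simp⟩

/-- The finitely many feasibility predicates and pairwise comparisons are eventually constant along
`l`, so the candidate realising the minimum at one generic `n` realises it eventually. -/
theorem mem_of_isLeast {ι : Type*} [Finite ι] {val : ι → ℕ → ℝ} {feasible : ι → ℕ → Prop}
    (hval : ∀ i, val i ∈ eventuallyRational l) (hfeas : ∀ i, EventuallyConst (feasible i) l)
    {μ : ℕ → ℝ} (hμ : ∀ᶠ n in l, IsLeast ((val · n) '' {i | feasible i n}) (μ n)) :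
    μ ∈ eventuallyRational l := by
  rcases l.eq_or_neBot with rfl | _
  · exact mem_bot
  choose tf htf using fun i => (hfeas i).eventuallyEq_const
  choose tc htc using fun i j => (eventuallyConst_le hl (hval i) (hval j)).eventuallyEq_const
  have hgeneric : ∀ᶠ n in l, (∀ i, feasible i n = tf i) ∧
      (∀ i j, (val i n ≤ val j n) = tc i j) ∧ IsLeast ((val · n) '' {i | feasible i n}) (μ n) :=
    (eventually_all.2 htf).and ((eventually_all.2 fun i => eventually_all.2 (htc i)).and hμ)
  obtain ⟨n₀, hf₀, hc₀, ⟨i₀, hi₀, hμ₀⟩, hlow₀⟩ := hgeneric.exists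
  refine mem_of_eventuallyEq (hval i₀) ?_
  filter_upwards [hgeneric] with n ⟨hf, hc, ⟨j, hj, hμj⟩, hlow⟩
  have hle₀ : val i₀ n₀ ≤ val j n₀ :=
    hμ₀.trans_le (hlow₀ ⟨j, ((hf₀ j).trans (hf j).symm).mpr hj, rfl⟩)
  have hle : val i₀ n ≤ val j n := ((hc i₀ j).trans (hc₀ i₀ j).symm).mpr hle₀
  exact le_antisymm (hle.trans_eq hμj) (hlow ⟨i₀, ((hf i₀).trans (hf₀ i₀).symm).mpr hi₀, rfl⟩)

theorem basicSolution_mem {ι κ : Type*} [Fintype κ] [DecidableEq ι] {A : ℕ → Matrix ι κ ℝ}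
    {w : ℕ → κ → ℝ} (hA : ∀ i k, (fun n => A n i k) ∈ eventuallyRational l)
    (hw : ∀ k, (fun n => w n k) ∈ eventuallyRational l) (S : Finset ι) (i : ι) :
    (fun n => basicSolution (A n) (w n) S i) ∈ eventuallyRational l := by
  unfold basicSolution
  split_ifs with hi
  · have hG : ∀ a b : S, (fun n => rowGram (A n) S a b) ∈ eventuallyRational l :=
      fun a b => dotProduct_mem (hA a) (hA b)
    refine div_mem hl ?_ (det_mem hG)
    simp only [cramer_apply]
    refine det_mem fun a b => ?_
    simp only [updateCol_apply]
    split_ifs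
    · exact dotProduct_mem (hA a) hw
    · exact hG a b
  · exact zero_mem _

theorem mem_of_isLeast_fiber {ι ι' κ : Type*} [Fintype ι] [DecidableEq ι] [Fintype ι']
    [Nonempty ι'] [Fintype κ] {A : ℕ → Matrix ι κ ℝ} {w : ℕ → κ → ℝ} {g : ι' → ℕ → ι → ℝ}
    (hA : ∀ i k, (fun n => A n i k) ∈ eventuallyRational l)
    (hw : ∀ k, (fun n => w n k) ∈ eventuallyRational l)
    (hg : ∀ i j, (fun n => g i n j) ∈ eventuallyRational l) {μ : ℕ → ℝ}
    (hμ : ∀ᶠ n in l, IsLeast {z | ∃ c, 0 ≤ c ∧ c ᵥ* A n = w n ∧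
      z = Finset.univ.inf' Finset.univ_nonempty fun i => g i n ⬝ᵥ c} (μ n)) :
    μ ∈ eventuallyRational l := by
  have hbs := basicSolution_mem hl hA hw
  refine mem_of_isLeast hl (fun σ : ι' × Finset ι => dotProduct_mem (hg σ.1) (hbs σ.2))
    (fun σ => (eventuallyConst_pi_nonneg hl (hbs σ.2)).comp₂ (· ∧ ·)
      (eventuallyConst_pi_eq hl (fun k => dotProduct_mem (hbs σ.2) fun i => hA i k) hw)) ?_
  filter_upwards [hμ] with n hn
  exact isLeast_image_basicSolution (A := A n) (w := w n) (g := fun i => g i n) hn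

end AtTop

end eventuallyRational

def residueFilter (T b : ℕ) : Filter ℕ := atTop ⊓ 𝓟 {n | n % T = b}

theorem residueFilter_le_atTop (T b : ℕ) : residueFilter T b ≤ atTop := inf_le_left

theorem eventually_mod_eq_residueFilter (T b : ℕ) : ∀ᶠ n in residueFilter T b, n % T = b :=
  mem_inf_of_right (mem_principal_self _)

theorem residueFilter_le_of_dvd {T T' : ℕ} (h : T ∣ T') (b : ℕ) :
    residueFilter T' b ≤ residueFilter T (b % T) :=
  inf_le_inf_left _ <| principal_mono.2 fun n (hn : n % T' = b) =>
    show n % T = b % T by rw [← hn, Nat.mod_mod_of_dvd _ h]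

theorem IsEventuallyQR.exists_period {f : ℕ → ℝ} (h : IsEventuallyQR f) :
    ∃ T, 0 < T ∧ ∀ b, f ∈ eventuallyRational (residueFilter T b) := by
  obtain ⟨p, q, ⟨π, hπ, P, hP⟩, ⟨π', hπ', Q, hQ⟩, N, hN⟩ := h
  refine ⟨π * π', Nat.mul_pos hπ hπ', fun b => ⟨P (b % π), Q (b % π'), ?_⟩⟩
  filter_upwards [(eventually_ge_atTop N).filter_mono (residueFilter_le_atTop _ b),
    eventually_mod_eq_residueFilter _ b] with n hn hnb
  have hπb : n % π = b % π := by rw [← hnb, Nat.mod_mod_of_dvd n (dvd_mul_right π π')]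
  have hπ'b : n % π' = b % π' := by rw [← hnb, Nat.mod_mod_of_dvd n (dvd_mul_left π' π)]
  simpa only [aeval_natCast_eq_intCast_eval, ← hπb, ← hπ'b, ← hP, ← hQ] using hN n hn

theorem exists_period_of_isEventuallyQR {ι : Type*} [Fintype ι] {f : ι → ℕ → ℝ}
    (h : ∀ i, IsEventuallyQR (f i)) :
    ∃ T, 0 < T ∧ ∀ b i, f i ∈ eventuallyRational (residueFilter T b) := by
  choose T hT hf using fun i => (h i).exists_period
  exact ⟨∏ i, T i, Finset.prod_pos fun i _ => hT i, fun b i => eventuallyRational.mem_of_le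
    (hf i _) (residueFilter_le_of_dvd (Finset.dvd_prod_of_mem T (Finset.mem_univ i)) b)⟩

theorem isEventuallyQR_of_forall_residueFilter {T : ℕ} (hT : 0 < T) {f : ℕ → ℝ}
    (h : ∀ b, f ∈ eventuallyRational (residueFilter T b)) : IsEventuallyQR f := by
  choose P Q hPQ using h
  have hev : ∀ᶠ n in atTop, ∀ b : Fin T, n % T = b →
      aeval (n : ℝ) (Q b) ≠ 0 ∧ f n = aeval (n : ℝ) (P b) / aeval (n : ℝ) (Q b) :=
    eventually_all.2 fun b => eventually_inf_principal.1 (hPQ b)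
  obtain ⟨N, hN⟩ := eventually_atTop.1 hev
  refine ⟨fun n => (P (n % T)).eval (n : ℤ), fun n => (Q (n % T)).eval (n : ℤ),
    ⟨T, hT, P, fun n => rfl⟩, ⟨T, hT, Q, fun n => rfl⟩, N, fun n hn => ?_⟩
  simpa only [aeval_natCast_eq_intCast_eval] using hN n hn ⟨n % T, Nat.mod_lt n hT⟩ rfl

theorem setOf_cone_fiber_eq {ι ι' δ ε : Type*} [Fintype ι] [Fintype ι'] [Nonempty ι']
    [Fintype δ] (R : Matrix ι δ ℝ) (D : Matrix ε δ ℝ) (a : ι' → δ → ℝ) (ℓ : δ → ℝ)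
    (w : ε → ℝ) :
    {z | ∃ y ∈ {y | ∃ c, 0 ≤ c ∧ y = c ᵥ* R}, D *ᵥ y = w ∧
      z = (Finset.univ.inf' Finset.univ_nonempty fun i => a i ⬝ᵥ y) - ℓ ⬝ᵥ y} =
    {z | ∃ c, 0 ≤ c ∧ c ᵥ* (R * Dᵀ) = w ∧
      z = Finset.univ.inf' Finset.univ_nonempty fun i => (R *ᵥ (a i - ℓ)) ⬝ᵥ c} := by
  have hobj : ∀ c : ι → ℝ,
      (Finset.univ.inf' Finset.univ_nonempty fun i => a i ⬝ᵥ c ᵥ* R) - ℓ ⬝ᵥ c ᵥ* R =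
        Finset.univ.inf' Finset.univ_nonempty fun i => (R *ᵥ (a i - ℓ)) ⬝ᵥ c := by
    intro c
    rw [Finset.apply_inf'_eq_inf'_comp _ (· - ℓ ⬝ᵥ c ᵥ* R)
      fun x y => (min_sub_sub_right x y _).symm]
    congr 1
    funext i
    rw [Function.comp_apply, ← sub_dotProduct, dotProduct_comm, ← dotProduct_mulVec,
      dotProduct_comm]
  ext z
  constructor
  · rintro ⟨_, ⟨c, hc, rfl⟩, hw, rfl⟩
    exact ⟨c, hc, by rw [← vecMul_vecMul, vecMul_transpose, hw], hobj c⟩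
  · rintro ⟨c, hc, hw, rfl⟩
    exact ⟨_, ⟨c, hc, rfl⟩, by rw [← vecMul_transpose, vecMul_vecMul, hw], (hobj c).symm⟩

/-- Quasirationality of scl along a family, abstract polyhedral version.
`K(n)` is the cone on extremal rays with integral linear coordinates
`u_i + n·v_i`; the Klein function `κ_n` of the sail is the minimum of finitely many
linear functionals whose coefficients are eventually quasirational in `n` (as the
sail has quasipolynomial vertices); `L` is a fixed rational linear functional,
`dmap` a fixed rational linear map, and `w(n)` has integral linear coordinates.
If `μ(n)` is the minimum of `κ_n(y) − L(y)` over the fiber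
`{y ∈ K(n) : dmap y = w(n)}`, then `μ` is eventually quasirational. -/
theorem stmt_19 (d e r m : ℕ)
    (u v : Fin r → Fin d → ℤ)
    (K : ℕ → Set (Fin d → ℝ))
    (hK : ∀ n, K n = {x : Fin d → ℝ | ∃ c : Fin r → ℝ, (∀ i, 0 ≤ c i) ∧
      x = ∑ i, c i • (fun j => (u i j : ℝ) + (n : ℝ) * (v i j : ℝ))})
    (coeff : Fin (m + 1) → Fin d → ℕ → ℝ)
    (hcoeff : ∀ i j, IsEventuallyQR (coeff i j))
    (κ : ℕ → (Fin d → ℝ) → ℝ)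
    (hκ : ∀ n (x : Fin d → ℝ),
      κ n x = Finset.univ.inf' Finset.univ_nonempty
        (fun i : Fin (m + 1) => ∑ j, coeff i j n * x j))
    (L : Fin d → ℚ) (dmap : Fin e → Fin d → ℚ)
    (aw bw : Fin e → ℤ) (w : ℕ → Fin e → ℝ)
    (hw : ∀ n j, w n j = (aw j : ℝ) * n + (bw j : ℝ))
    (μ : ℕ → ℝ) (N₀ : ℕ)
    (hμ : ∀ n ≥ N₀, IsLeast
      {z : ℝ | ∃ y ∈ K n, (∀ j, ∑ i, (dmap j i : ℝ) * y i = w n j) ∧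
        z = κ n y - ∑ i, (L i : ℝ) * y i} (μ n)) :
    IsEventuallyQR μ := by
  obtain ⟨T, hT, hcoeffT⟩ :=
    exists_period_of_isEventuallyQR fun ij : Fin (m + 1) × Fin d => hcoeff ij.1 ij.2
  refine isEventuallyQR_of_forall_residueFilter hT fun b => ?_
  let rays : ℕ → Matrix (Fin r) (Fin d) ℝ := fun n => of fun i j => (u i j : ℝ) + n * v i j
  let D : Matrix (Fin e) (Fin d) ℝ := of fun j i => (dmap j i : ℝ)
  open eventuallyRational in
  have hrays : ∀ i j, (fun n => rays n i j) ∈ eventuallyRational (residueFilter T b) :=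
    fun i j => add_mem (intCast_mem _) (mul_mem natCast_mem (intCast_mem _))
  open eventuallyRational in
  refine mem_of_isLeast_fiber (residueFilter_le_atTop T b) (A := fun n => rays n * Dᵀ)
    (g := fun i n => rays n *ᵥ ((fun j => coeff i j n) - fun j => (L j : ℝ)))
    (fun i k => dotProduct_mem (hrays i) fun j => ratCast_mem _)
    (fun k => mem_of_eventuallyEq (add_mem (mul_mem (intCast_mem _) natCast_mem)
      (intCast_mem _)) (.of_forall fun n => (hw n k).symm))
    (fun i k => dotProduct_mem (hrays k) fun j => sub_mem (hcoeffT b (i, j)) (ratCast_mem _)) ?_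
  filter_upwards [(eventually_ge_atTop N₀).filter_mono (residueFilter_le_atTop T b)] with n hn
  rw [← setOf_cone_fiber_eq]
  convert hμ n hn using 2
  ext z
  simp only [Set.mem_ofPred_eq, hK, hκ, funext_iff, vecMul_eq_sum]
  rfl
end
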